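/- arXiv:2205.05653 — 10 statements merged into one kernel-verified Lean document; each statement's English description precedes it below -/
import Mathlib

section
/- Consider sequences (z^k)_{k=0}^K, (z_f^k)_{k=0}^K in ℝ^{d_x}, (y^k)_{k=0}^K, (y_f^k)_{k=0}^K in ℝ^{d_y}, together with (z_g^k, y_g^k), (x_f^{k+1}, y_f^{k+1}, z_f^{k+1}, w_f^{k+1}) for k = 0, …, K−1 such that for every such k: (z_g^k, y_g^k) = α(z^k, y^k) + (1−α)(z_f^k, y_f^k); the inclusions z_f^{k+1} − ∇_x F̂(x_f^{k+1}, y_f^{k+1}) ∈ ∂r(x_f^{k+1}) and w_f^{k+1} + ∇_y F̂(x_f^{k+1}, y_f^{k+1}) ∈ ∂g(y_f^{k+1}) hold; the inexactness condition (8/μ_x)‖z_f^{k+1} + (μ_x/2)(x_f^{k+1} − μ_x^{−1} z_g^k)‖² + θ_y‖w_f^{k+1} + μ_y y_f^{k+1} + θ_y^{−1}(y_f^{k+1} − y_g^k)‖² ≤ (μ_x/8)‖x_f^{k+1} + μ_x^{−1} z_g^k‖² + θ_y^{−1}‖y_f^{k+1} − y_g^k‖² holds; and z^{k+1} = z^k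 + η_z μ_x^{−1}(z_f^{k+1} − z^k) − η_z(x_f^{k+1} + μ_x^{−1} z_f^{k+1}), y^{k+1} = y^k + η_y μ_y(y_f^{k+1} − y^k) − η_y(w_f^{k+1} + μ_y y_f^{k+1}), where α ∈ (0,1], θ_y > 0, η_z = μ_x/2, η_y = min{1/(2μ_y), θ_y/(2α)}. Let (x*, y*) satisfy −∇_x F(x*, y*) ∈ ∂r(x*) and ∇_y F(x*, y*) ∈ ∂g(y*), set z* = −μ_x x*, and assume P(z_f^0, y_f^0) < +∞. Then with ρ = 1/max{2/α, 2α/(θ_y μ_y)} and L^0 = (1/η_z)‖z^0 − z*‖² + (1/η_y)‖y^0 − y*‖² + (2/α)(P(z_f^0, y_f^0) − P(z*, y*)), one has (1/η_z)‖z^K − z*‖² + (1/η_y)‖y^K − y*‖² ≤ (1 − ρ)^K · L^0; in particular ‖(−μ_x^{−1} z^K) − x*‖² + ‖y^K − y*‖² ≤ max{η_z μ_x^{−2}, η_y} · L^0 · (1 − ρ)^K. -/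
open scoped RealInnerProductSpace

noncomputable section

/-- `p ∈ ∂h(x)` iff `h(x) < +∞` and `h(x') ≥ h(x) + ⟪p, x' − x⟫` for all `x'`. -/
def SubdiffAt {E : Type*} [NormedAddCommGroup E] [InnerProductSpace ℝ E]
    (h : E → EReal) (x : E) : Set E :=
  {p | h x < ⊤ ∧ ∀ x' : E, h x + ((⟪p, x' - x⟫ : ℝ) : EReal) ≤ h x'}

/-- The pointwise conjugate `G(z, y) = sup_x [⟪x, z⟫ − r(x) − F̂(x, y) + g(y)]`. -/
def conjG {E F : Type*} [NormedAddCommGroup E] [InnerProductSpace ℝ E]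
    [NormedAddCommGroup F] [InnerProductSpace ℝ F]
    (r : E → EReal) (g : F → EReal) (Fh : E → F → ℝ) (z : E) (y : F) : EReal :=
  ⨆ x : E, (((⟪x, z⟫ : ℝ) : EReal) - r x - ((Fh x y : ℝ) : EReal) + g y)

/-- `P(z, y) = (1/(2μₓ))‖z‖² + (μ_y/2)‖y‖² + G(z, y)`. -/
def Pfun {E F : Type*} [NormedAddCommGroup E] [InnerProductSpace ℝ E]
    [NormedAddCommGroup F] [InnerProductSpace ℝ F]
    (μx μy : ℝ) (r : E → EReal) (g : F → EReal) (Fh : E → F → ℝ) (z : E) (y : F) : EReal :=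
  ((1 / (2 * μx) * ‖z‖ ^ 2 + μy / 2 * ‖y‖ ^ 2 : ℝ) : EReal) + conjG r g Fh z y

/-- Convexity for extended-real-valued functions. -/
def ERealConvexOn {E : Type*} [AddCommGroup E] [Module ℝ E] (f : E → EReal) : Prop :=
  ∀ x1 x2 : E, ∀ a b : ℝ, 0 ≤ a → 0 ≤ b → a + b = 1 →
    f (a • x1 + b • x2) ≤ (a : EReal) * f x1 + (b : EReal) * f x2

/-!
Strong convexity–concavity of `F` makes `F̂(·, y)` convex and `F̂(x, ·)` concave, so the two
inclusions at step `k + 1` say that the supremum defining `G(z_f^{k+1}, y_f^{k+1})` is attained at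
`x_f^{k+1}` and that `(x_f^{k+1}, w_f^{k+1})` is a subgradient of `G` there. Hence `P`, which is `G`
plus a strongly convex quadratic, is finite at the iterates and has there the strong subgradient
`(s, t) = (x_f^{k+1} + μₓ⁻¹ z_f^{k+1}, w_f^{k+1} + μ_y y_f^{k+1})`; at the saddle point this
subgradient vanishes, so `P(z*, y*)` is the minimum of `P`. The inexactness condition implies
`μₓ‖s + μₓ⁻¹(z_f^{k+1} − z_g^k)‖² + θ_y‖t + θ_y⁻¹(y_f^{k+1} − y_g^k)‖²
  ≤ μₓ⁻¹‖z_f^{k+1} − z_g^k‖² + θ_y⁻¹‖y_f^{k+1} − y_g^k‖²`.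
Testing the subgradient inequality at `(z*, y*)` and at `(z_f^k, y_f^k)` and combining it with
this bound and the step-size constraints `η_z μₓ⁻¹, η_y μ_y ≤ 1/2`, `2αη_z ≤ μₓ`, `2αη_y ≤ θ_y`
shows that
`L^k = (1/η_z)‖z^k − z*‖² + (1/η_y)‖y^k − y*‖² + (2/α)(P(z_f^k, y_f^k) − P(z*, y*))`
contracts by the factor `1 − ρ` at every step.
-/

theorem hatF_add_inner_le {E F : Type*} [NormedAddCommGroup E] [InnerProductSpace ℝ E] [Norm F]
    {F₀ Fh : E → F → ℝ} {gFx : E → F → E} {μx μy : ℝ}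
    (hFh : ∀ x y, Fh x y = F₀ x y - μx / 2 * ‖x‖ ^ 2 + μy / 2 * ‖y‖ ^ 2)
    (hconv : ∀ x1 x2 y, F₀ x2 y ≥ F₀ x1 y + ⟪gFx x1 y, x2 - x1⟫ + μx / 2 * ‖x2 - x1‖ ^ 2)
    (x x' : E) (y : F) :
    Fh x y + ⟪gFx x y - μx • x, x' - x⟫ ≤ Fh x' y := by
  have hsq : ‖x'‖ ^ 2 = ‖x‖ ^ 2 + 2 * ⟪x, x' - x⟫ + ‖x' - x‖ ^ 2 := by
    rw [← norm_add_sq_real, add_sub_cancel]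
  rw [hFh, hFh, inner_sub_left, real_inner_smul_left]
  linear_combination hconv x x' y + μx / 2 * hsq

theorem hatF_le_add_inner {E F : Type*} [Norm E] [NormedAddCommGroup F] [InnerProductSpace ℝ F]
    {F₀ Fh : E → F → ℝ} {gFy : E → F → F} {μx μy : ℝ}
    (hFh : ∀ x y, Fh x y = F₀ x y - μx / 2 * ‖x‖ ^ 2 + μy / 2 * ‖y‖ ^ 2)
    (hconc : ∀ x y1 y2, F₀ x y2 ≤ F₀ x y1 + ⟪gFy x y1, y2 - y1⟫ - μy / 2 * ‖y2 - y1‖ ^ 2)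
    (x : E) (y y' : F) :
    Fh x y' ≤ Fh x y + ⟪gFy x y + μy • y, y' - y⟫ := by
  have hsq : ‖y'‖ ^ 2 = ‖y‖ ^ 2 + 2 * ⟪y, y' - y⟫ + ‖y' - y‖ ^ 2 := by
    rw [← norm_add_sq_real, add_sub_cancel]
  rw [hFh, hFh, inner_add_left, real_inner_smul_left]
  linear_combination hconc x y y' + μy / 2 * hsq

section Conjugate

variable {E F : Type*} [NormedAddCommGroup E] [InnerProductSpace ℝ E]
  [NormedAddCommGroup F] [InnerProductSpace ℝ F]
  {r : E → EReal} {g : F → EReal} {Fh : E → F → ℝ}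

theorem conjG_le {z x q : E} {y : F} {a b : ℝ}
    (hq : ∀ x', Fh x y + ⟪q, x' - x⟫ ≤ Fh x' y) (hr : z - q ∈ SubdiffAt r x)
    (hra : r x = a) (hgb : g y = b) :
    conjG r g Fh z y ≤ ((⟪x, z⟫ - a - Fh x y + b : ℝ) : EReal) := by
  refine iSup_le fun x' => ?_
  have hsub := hr.2 x'
  rw [hra] at hsub
  by_cases htop : r x' = ⊤
  · simp [htop]
  obtain ⟨a', ha'⟩ : ∃ a' : ℝ, r x' = a' :=
    ⟨_, (EReal.coe_toReal htop (ne_bot_of_le_ne_bot (by simp) hsub)).symm⟩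
  rw [ha'] at hsub ⊢
  rw [hgb]
  norm_cast at hsub ⊢
  rw [inner_sub_left, inner_sub_right] at hsub
  rw [real_inner_comm z x', real_inner_comm z x]
  linarith [hq x']

theorem le_conjG {z x : E} {y w qy : F} {a b : ℝ}
    (hqy : ∀ y', Fh x y' ≤ Fh x y + ⟪qy, y' - y⟫) (hg : w + qy ∈ SubdiffAt g y)
    (hra : r x = a) (hgb : g y = b) (z' : E) (y' : F) :
    ((⟪x, z⟫ - a - Fh x y + b + ⟪x, z' - z⟫ + ⟪w, y' - y⟫ : ℝ) : EReal)
      ≤ conjG r g Fh z' y' := by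
  refine le_trans ?_ (le_iSup _ x)
  have hsub := hg.2 y'
  rw [hgb] at hsub
  by_cases htop : g y' = ⊤
  · simp only [hra, htop]
    rw [← EReal.coe_sub, ← EReal.coe_sub, EReal.coe_add_top]
    exact le_top
  obtain ⟨b', hb'⟩ : ∃ b' : ℝ, g y' = b' :=
    ⟨_, (EReal.coe_toReal htop (ne_bot_of_le_ne_bot (by simp) hsub)).symm⟩
  rw [hb'] at hsub
  simp only [hra, hb']
  norm_cast at hsub ⊢
  rw [inner_add_left] at hsub
  rw [inner_sub_right]
  linarith [hqy y']

theorem exists_conjG_eq_and_subgradient {z x q : E} {y w qy : F}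
    (hq : ∀ x', Fh x y + ⟪q, x' - x⟫ ≤ Fh x' y) (hqy : ∀ y', Fh x y' ≤ Fh x y + ⟪qy, y' - y⟫)
    (hr : z - q ∈ SubdiffAt r x) (hg : w + qy ∈ SubdiffAt g y) (hrx : r x ≠ ⊥) (hgy : g y ≠ ⊥) :
    ∃ c : ℝ, conjG r g Fh z y = c ∧
      ∀ z' y', ((c + ⟪x, z' - z⟫ + ⟪w, y' - y⟫ : ℝ) : EReal) ≤ conjG r g Fh z' y' := by
  obtain ⟨a, ha⟩ : ∃ a : ℝ, r x = a := ⟨_, (EReal.coe_toReal hr.1.ne hrx).symm⟩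
  obtain ⟨b, hb⟩ : ∃ b : ℝ, g y = b := ⟨_, (EReal.coe_toReal hg.1.ne hgy).symm⟩
  refine ⟨⟪x, z⟫ - a - Fh x y + b, le_antisymm (conjG_le hq hr ha hb) ?_,
    le_conjG hqy hg ha hb⟩
  simpa using le_conjG (z := z) hqy hg ha hb z y

theorem exists_Pfun_eq_and_strong_subgradient (μx μy : ℝ) {z x q : E} {y w qy : F}
    (hq : ∀ x', Fh x y + ⟪q, x' - x⟫ ≤ Fh x' y) (hqy : ∀ y', Fh x y' ≤ Fh x y + ⟪qy, y' - y⟫)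
    (hr : z - q ∈ SubdiffAt r x) (hg : w + qy ∈ SubdiffAt g y) (hrx : r x ≠ ⊥) (hgy : g y ≠ ⊥) :
    ∃ p : ℝ, Pfun μx μy r g Fh z y = p ∧
      ∀ z' y', ((p + ⟪x + μx⁻¹ • z, z' - z⟫ + ⟪w + μy • y, y' - y⟫
          + μx⁻¹ / 2 * ‖z' - z‖ ^ 2 + μy / 2 * ‖y' - y‖ ^ 2 : ℝ) : EReal)
        ≤ Pfun μx μy r g Fh z' y' := by
  obtain ⟨c, hc, hsub⟩ := exists_conjG_eq_and_subgradient hq hqy hr hg hrx hgy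
  refine ⟨1 / (2 * μx) * ‖z‖ ^ 2 + μy / 2 * ‖y‖ ^ 2 + c, by rw [Pfun, hc]; norm_cast,
    fun z' y' => ?_⟩
  rw [Pfun]
  refine le_of_eq_of_le ?_ (add_le_add le_rfl (hsub z' y'))
  have hz : ‖z'‖ ^ 2 = ‖z‖ ^ 2 + 2 * ⟪z, z' - z⟫ + ‖z' - z‖ ^ 2 := by
    rw [← norm_add_sq_real, add_sub_cancel]
  have hy : ‖y'‖ ^ 2 = ‖y‖ ^ 2 + 2 * ⟪y, y' - y⟫ + ‖y' - y‖ ^ 2 := by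
    rw [← norm_add_sq_real, add_sub_cancel]
  rw [← EReal.coe_add]
  congr 1
  rw [inner_add_left, inner_add_left, real_inner_smul_left, real_inner_smul_left]
  linear_combination -(1 / (2 * μx)) * hz - μy / 2 * hy

theorem exists_Pfun_eq_and_forall_le {μx μy : ℝ} (hμx : 0 < μx) (hμy : 0 ≤ μy)
    {z x q : E} {y qy : F}
    (hq : ∀ x', Fh x y + ⟪q, x' - x⟫ ≤ Fh x' y) (hqy : ∀ y', Fh x y' ≤ Fh x y + ⟪qy, y' - y⟫)
    (hz : z = -(μx • x)) (hr : z - q ∈ SubdiffAt r x) (hg : -(μy • y) + qy ∈ SubdiffAt g y)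
    (hrx : r x ≠ ⊥) (hgy : g y ≠ ⊥) :
    ∃ p : ℝ, Pfun μx μy r g Fh z y = p ∧ ∀ z' y', (p : EReal) ≤ Pfun μx μy r g Fh z' y' := by
  obtain ⟨p, hp, hsub⟩ := exists_Pfun_eq_and_strong_subgradient μx μy hq hqy hr hg hrx hgy
  refine ⟨p, hp, fun z' y' => le_trans (EReal.coe_le_coe_iff.2 ?_) (hsub z' y')⟩
  have hx : x + μx⁻¹ • z = 0 := by
    rw [hz, smul_neg, smul_smul, inv_mul_cancel₀ hμx.ne', one_smul, add_neg_cancel]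
  rw [hx, neg_add_cancel, inner_zero_left, inner_zero_left]
  have : 0 ≤ μx⁻¹ / 2 * ‖z' - z‖ ^ 2 + μy / 2 * ‖y' - y‖ ^ 2 := by positivity
  linarith

end Conjugate

section Lyapunov

variable {E F : Type*} [NormedAddCommGroup E] [InnerProductSpace ℝ E]
  [NormedAddCommGroup F] [InnerProductSpace ℝ F]

theorem inexact_residual_le {μ : ℝ} (hμ : 0 < μ) (xf zf zg : E) :
    μ * ‖xf + μ⁻¹ • zf + μ⁻¹ • (zf - zg)‖ ^ 2 - μ⁻¹ * ‖zf - zg‖ ^ 2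
      ≤ 8 / μ * ‖zf + (μ / 2) • (xf - μ⁻¹ • zg)‖ ^ 2 - μ / 8 * ‖xf + μ⁻¹ • zg‖ ^ 2 := by
  set d := xf + μ⁻¹ • zf + μ⁻¹ • (zf - zg)
  have hd₁ : zf + (μ / 2) • (xf - μ⁻¹ • zg) = (μ / 2) • d := by
    simp only [d]
    match_scalars <;> field_simp
    ring
  have hd₂ : xf + μ⁻¹ • zg = d - (2 * μ⁻¹) • (zf - zg) := by
    simp only [d]; match_scalars <;> field_simp <;> ring
  have hpar : ‖d - (2 * μ⁻¹) • (zf - zg)‖ ^ 2 ≤ 2 * (‖d‖ ^ 2 + (2 * μ⁻¹) ^ 2 * ‖zf - zg‖ ^ 2) := by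
    have := parallelogram_law_with_norm ℝ d ((2 * μ⁻¹) • (zf - zg))
    rw [norm_smul, Real.norm_of_nonneg (by positivity), mul_pow] at this
    linarith [sq_nonneg ‖d + (2 * μ⁻¹) • (zf - zg)‖]
  have hc₁ : 8 / μ * (μ / 2) ^ 2 = 2 * μ := by field_simp; ring
  have hc₂ : μ / 8 * (2 * (‖d‖ ^ 2 + (2 * μ⁻¹) ^ 2 * ‖zf - zg‖ ^ 2))
      = μ / 4 * ‖d‖ ^ 2 + μ⁻¹ * ‖zf - zg‖ ^ 2 := by field_simp; ring
  rw [hd₁, hd₂, norm_smul, Real.norm_of_nonneg (by positivity), mul_pow, ← mul_assoc, hc₁]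
  have hpar' := mul_le_mul_of_nonneg_left hpar (by positivity : (0 : ℝ) ≤ μ / 8)
  rw [hc₂] at hpar'
  linarith [mul_nonneg hμ.le (sq_nonneg ‖d‖)]

theorem lyapunov_coord_step {μ η l α ρ : ℝ} (hμ : 0 ≤ μ) (hη : 0 < η) (hα : 0 < α)
    (hημ : η * μ ≤ 1 / 2) (hηl : 2 * α * η ≤ l) (hρ : ρ ≤ η * μ)
    {u u' f f' g us s : E} (hg : g = α • u + (1 - α) • f)
    (hu' : u' = u + (η * μ) • (f' - u) - η • s) :
    1 / η * ‖u' - us‖ ^ 2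
      ≤ (1 - ρ) / η * ‖u - us‖ ^ 2 + μ * ‖us - f'‖ ^ 2 + 2 * ⟪s, us - f'⟫
        + (2 / α - 2) * ⟪s, f - f'⟫
        + 1 / α * (l * ‖s + l⁻¹ • (f' - g)‖ ^ 2 - l⁻¹ * ‖f' - g‖ ^ 2) := by
  have hl : 0 < l := lt_of_lt_of_le (by positivity) hηl
  set d := u - us
  set e := f' - u
  have hexpand : 1 / η * ‖u' - us‖ ^ 2
      = (1 / η - μ) * ‖d‖ ^ 2 + μ * ‖us - f'‖ ^ 2 - 2 * ⟪s, d⟫ + η * ‖μ • e - s‖ ^ 2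
        - μ * ‖e‖ ^ 2 := by
    have h1 : u' - us = d + η • (μ • e - s) := by rw [hu']; module
    have h2 : us - f' = -(d + e) := by simp only [d, e]; abel
    rw [h1, h2, norm_neg, norm_add_sq_real, norm_add_sq_real, inner_smul_right, inner_sub_right,
      real_inner_smul_right, norm_smul, Real.norm_of_nonneg hη.le, real_inner_comm s d]
    field_simp
    ring
  have hpar : ‖μ • e - s‖ ^ 2 ≤ 2 * (μ ^ 2 * ‖e‖ ^ 2 + ‖s‖ ^ 2) := by
    have := parallelogram_law_with_norm ℝ (μ • e) s
    rw [norm_smul, Real.norm_of_nonneg hμ, mul_pow] at this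
    nlinarith [sq_nonneg ‖μ • e + s‖]
  have hsplit : 1 / α * (l * ‖s + l⁻¹ • (f' - g)‖ ^ 2 - l⁻¹ * ‖f' - g‖ ^ 2)
      = l / α * ‖s‖ ^ 2 + 2 / α * ⟪s, f' - g⟫ := by
    rw [norm_add_sq_real, real_inner_smul_right, norm_smul, Real.norm_of_nonneg (by positivity)]
    field_simp
    ring
  have hcross : -2 * ⟪s, d⟫
      = 2 * ⟪s, us - f'⟫ + (2 / α - 2) * ⟪s, f - f'⟫ + 2 / α * ⟪s, f' - g⟫ := by
    have : α • d + (f' - g) = -(α • (us - f')) - (1 - α) • (f - f') := by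
      simp only [d, hg]; module
    have h := congrArg (⟪s, ·⟫) this
    simp only [inner_add_right, inner_sub_right, inner_neg_right, real_inner_smul_right] at h ⊢
    field_simp
    linear_combination -h
  have hd : (1 / η - μ) * ‖d‖ ^ 2 ≤ (1 - ρ) / η * ‖d‖ ^ 2 := by
    have : (1 - ρ) / η - (1 / η - μ) = (η * μ - ρ) / η := by field_simp; ring
    exact mul_le_mul_of_nonneg_right (by linarith [div_nonneg (sub_nonneg.2 hρ) hη.le])
      (sq_nonneg _)
  have he : η * (2 * (μ ^ 2 * ‖e‖ ^ 2)) ≤ μ * ‖e‖ ^ 2 := by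
    nlinarith [mul_nonneg hμ (sq_nonneg ‖e‖)]
  have hs : 2 * η * ‖s‖ ^ 2 ≤ l / α * ‖s‖ ^ 2 :=
    mul_le_mul_of_nonneg_right (by rw [le_div_iff₀ hα]; linarith) (sq_nonneg _)
  rw [hexpand, hsplit]
  linarith [mul_le_mul_of_nonneg_left hpar hη.le]

theorem lyapunov_step {μ₁ μ₂ η₁ η₂ l₁ l₂ α ρ : ℝ} (hμ₁ : 0 ≤ μ₁) (hμ₂ : 0 ≤ μ₂)
    (hη₁ : 0 < η₁) (hη₂ : 0 < η₂) (hα : 0 < α)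
    (hημ₁ : η₁ * μ₁ ≤ 1 / 2) (hημ₂ : η₂ * μ₂ ≤ 1 / 2)
    (hηl₁ : 2 * α * η₁ ≤ l₁) (hηl₂ : 2 * α * η₂ ≤ l₂)
    (hρ₁ : ρ ≤ η₁ * μ₁) (hρ₂ : ρ ≤ η₂ * μ₂) (hρα : ρ ≤ α) (hα1 : α ≤ 1)
    {u u' f₁ f₁' g₁ us s : E} {v v' f₂ f₂' g₂ vs t : F} {pf pf' ps : ℝ}
    (hg₁ : g₁ = α • u + (1 - α) • f₁) (hg₂ : g₂ = α • v + (1 - α) • f₂)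
    (hu' : u' = u + (η₁ * μ₁) • (f₁' - u) - η₁ • s)
    (hv' : v' = v + (η₂ * μ₂) • (f₂' - v) - η₂ • t)
    (hinexact : l₁ * ‖s + l₁⁻¹ • (f₁' - g₁)‖ ^ 2 + l₂ * ‖t + l₂⁻¹ • (f₂' - g₂)‖ ^ 2
      ≤ l₁⁻¹ * ‖f₁' - g₁‖ ^ 2 + l₂⁻¹ * ‖f₂' - g₂‖ ^ 2)
    (hps : pf' + ⟪s, us - f₁'⟫ + ⟪t, vs - f₂'⟫ + μ₁ / 2 * ‖us - f₁'‖ ^ 2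
      + μ₂ / 2 * ‖vs - f₂'‖ ^ 2 ≤ ps)
    (hpf : pf' + ⟪s, f₁ - f₁'⟫ + ⟪t, f₂ - f₂'⟫ ≤ pf) (hmin : ps ≤ pf) :
    1 / η₁ * ‖u' - us‖ ^ 2 + 1 / η₂ * ‖v' - vs‖ ^ 2 + 2 / α * (pf' - ps)
      ≤ (1 - ρ) * (1 / η₁ * ‖u - us‖ ^ 2 + 1 / η₂ * ‖v - vs‖ ^ 2 + 2 / α * (pf - ps)) := by
  have hu := lyapunov_coord_step (us := us) hμ₁ hη₁ hα hημ₁ hηl₁ hρ₁ hg₁ hu'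
  have hv := lyapunov_coord_step (us := vs) hμ₂ hη₂ hα hημ₂ hηl₂ hρ₂ hg₂ hv'
  have hcoef : 0 ≤ 2 / α - 2 := by rw [sub_nonneg, le_div_iff₀ hα]; linarith
  have hgap : 2 / α - 2 ≤ (1 - ρ) * (2 / α) := by
    have : (1 - ρ) * (2 / α) - (2 / α - 2) = 2 * (α - ρ) / α := by field_simp; ring
    linarith [div_nonneg (mul_nonneg zero_le_two (sub_nonneg.2 hρα)) hα.le]
  have h1 := mul_le_mul_of_nonneg_left hpf hcoef
  have h2 := mul_le_mul_of_nonneg_right hgap (sub_nonneg.2 hmin)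
  have h3 := mul_le_mul_of_nonneg_left hinexact (one_div_nonneg.2 hα.le)
  linear_combination hu + hv + 2 * hps + h1 + h2 + h3

end Lyapunov

theorem one_div_max_le_min_mul {α θ μ : ℝ} (hα : 0 < α) (hα1 : α ≤ 1) (hθ : 0 < θ)
    (hμ : 0 < μ) :
    1 / max (2 / α) (2 * α / (θ * μ)) ≤ min (1 / (2 * μ)) (θ / (2 * α)) * μ := by
  rw [min_mul_of_nonneg _ _ hμ.le]
  refine le_min ?_ ?_
  · calc 1 / max (2 / α) (2 * α / (θ * μ)) ≤ 1 / (2 / α) :=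
          one_div_le_one_div_of_le (by positivity) (le_max_left _ _)
      _ ≤ 1 / (2 * μ) * μ := by field_simp; linarith
  · calc 1 / max (2 / α) (2 * α / (θ * μ)) ≤ 1 / (2 * α / (θ * μ)) :=
          one_div_le_one_div_of_le (by positivity) (le_max_right _ _)
      _ = θ / (2 * α) * μ := by field_simp

theorem mul_add_mul_le_max_mul {p q a b : ℝ} (ha : 0 ≤ a) (hb : 0 ≤ b) :
    p * a + q * b ≤ max p q * (a + b) := by
  rw [mul_add]
  exact add_le_add (mul_le_mul_of_nonneg_right (le_max_left p q) ha)
    (mul_le_mul_of_nonneg_right (le_max_right p q) hb)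

theorem algorithm_stepsizes {μx μy α θy ηz ηy ρ : ℝ} (hμx : 0 < μx) (hμy : 0 < μy)
    (hα0 : 0 < α) (hα1 : α ≤ 1) (hθy : 0 < θy) (hηz : ηz = μx / 2)
    (hηy : ηy = min (1 / (2 * μy)) (θy / (2 * α))) (hρ : ρ = 1 / max (2 / α) (2 * α / (θy * μy))) :
    0 < ηz ∧ 0 < ηy ∧ ηz * μx⁻¹ ≤ 1 / 2 ∧ ηy * μy ≤ 1 / 2 ∧ 2 * α * ηz ≤ μx ∧
      2 * α * ηy ≤ θy ∧ ρ ≤ ηz * μx⁻¹ ∧ ρ ≤ ηy * μy ∧ ρ ≤ α := by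
  have hηzμ : ηz * μx⁻¹ = 1 / 2 := by rw [hηz]; field_simp
  have hρα : ρ ≤ α / 2 := by
    rw [hρ, ← one_div_div 2 α]
    exact one_div_le_one_div_of_le (by positivity) (le_max_left _ _)
  refine ⟨by rw [hηz]; positivity, by rw [hηy]; positivity, hηzμ.le, ?_, by rw [hηz]; nlinarith,
    ?_, by linarith, hρ ▸ hηy ▸ one_div_max_le_min_mul hα0 hα1 hθy hμy, by linarith⟩
  · rw [hηy, ← le_div_iff₀ hμy, div_div]
    exact min_le_left _ _
  · rw [hηy, ← le_div_iff₀' (by positivity)]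
    exact min_le_right _ _

theorem norm_sq_add_norm_sq_le_max_mul {E F : Type*} [NormedAddCommGroup E] [NormedSpace ℝ E]
    [NormedAddCommGroup F] {μ ηz ηy B : ℝ} (hμ : 0 < μ) (hηz : 0 < ηz) (hηy : 0 < ηy)
    {z xs zs : E} {y ys : F} (hzs : zs = -(μ • xs))
    (h : 1 / ηz * ‖z - zs‖ ^ 2 + 1 / ηy * ‖y - ys‖ ^ 2 ≤ B) :
    ‖(-μ⁻¹) • z - xs‖ ^ 2 + ‖y - ys‖ ^ 2 ≤ max (ηz * μ⁻¹ ^ 2) ηy * B := by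
  have hxs : (-μ⁻¹) • z - xs = (-μ⁻¹) • (z - zs) := by
    rw [hzs]; match_scalars <;> field_simp
  calc ‖(-μ⁻¹) • z - xs‖ ^ 2 + ‖y - ys‖ ^ 2
      = ηz * μ⁻¹ ^ 2 * (1 / ηz * ‖z - zs‖ ^ 2) + ηy * (1 / ηy * ‖y - ys‖ ^ 2) := by
        rw [hxs, norm_smul, mul_pow, norm_neg, Real.norm_of_nonneg (by positivity)]
        field_simp
    _ ≤ max (ηz * μ⁻¹ ^ 2) ηy * (1 / ηz * ‖z - zs‖ ^ 2 + 1 / ηy * ‖y - ys‖ ^ 2) :=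
        mul_add_mul_le_max_mul (by positivity) (by positivity)
    _ ≤ max (ηz * μ⁻¹ ^ 2) ηy * B := mul_le_mul_of_nonneg_left h (le_max_of_le_right hηy.le)

theorem stmt_0_general {dx dy : ℕ}
    (F : EuclideanSpace ℝ (Fin dx) → EuclideanSpace ℝ (Fin dy) → ℝ)
    (gFx : EuclideanSpace ℝ (Fin dx) → EuclideanSpace ℝ (Fin dy) → EuclideanSpace ℝ (Fin dx))
    (gFy : EuclideanSpace ℝ (Fin dx) → EuclideanSpace ℝ (Fin dy) → EuclideanSpace ℝ (Fin dy))
    (μx μy : ℝ) (hμx : 0 < μx) (hμy : 0 < μy)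
    (hconv : ∀ x1 x2 y, F x2 y ≥ F x1 y + ⟪gFx x1 y, x2 - x1⟫ + μx / 2 * ‖x2 - x1‖ ^ 2)
    (hconc : ∀ x y1 y2, F x y2 ≤ F x y1 + ⟪gFy x y1, y2 - y1⟫ - μy / 2 * ‖y2 - y1‖ ^ 2)
    (r : EuclideanSpace ℝ (Fin dx) → EReal) (g : EuclideanSpace ℝ (Fin dy) → EReal)
    (hrbot : ∀ x, r x ≠ ⊥) (hgbot : ∀ y, g y ≠ ⊥)
    (Fh : EuclideanSpace ℝ (Fin dx) → EuclideanSpace ℝ (Fin dy) → ℝ)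
    (hFh : ∀ x y, Fh x y = F x y - μx / 2 * ‖x‖ ^ 2 + μy / 2 * ‖y‖ ^ 2)
    -- parameters of the algorithm
    (α θy ηz ηy : ℝ) (hα0 : 0 < α) (hα1 : α ≤ 1) (hθy : 0 < θy)
    (hηz : ηz = μx / 2) (hηy : ηy = min (1 / (2 * μy)) (θy / (2 * α)))
    (K : ℕ)
    (z zf zg xf : ℕ → EuclideanSpace ℝ (Fin dx))
    (y yf yg wf : ℕ → EuclideanSpace ℝ (Fin dy))
    (hzg : ∀ k < K, zg k = α • z k + (1 - α) • zf k)
    (hyg : ∀ k < K, yg k = α • y k + (1 - α) • yf k)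
    -- `z_f^{k+1} − ∇ₓ F̂(x_f^{k+1}, y_f^{k+1}) ∈ ∂r(x_f^{k+1})`,
    -- with `∇ₓ F̂(x, y) = ∇ₓ F(x, y) − μx x`
    (hincr : ∀ k < K,
      zf (k + 1) - (gFx (xf (k + 1)) (yf (k + 1)) - μx • xf (k + 1))
        ∈ SubdiffAt r (xf (k + 1)))
    -- `w_f^{k+1} + ∇_y F̂(x_f^{k+1}, y_f^{k+1}) ∈ ∂g(y_f^{k+1})`,
    -- with `∇_y F̂(x, y) = ∇_y F(x, y) + μy y`
    (hincg : ∀ k < K,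
      wf (k + 1) + (gFy (xf (k + 1)) (yf (k + 1)) + μy • yf (k + 1))
        ∈ SubdiffAt g (yf (k + 1)))
    (hinexact : ∀ k < K,
      (8 / μx) * ‖zf (k + 1) + (μx / 2) • (xf (k + 1) - μx⁻¹ • zg k)‖ ^ 2
          + θy * ‖wf (k + 1) + μy • yf (k + 1) + θy⁻¹ • (yf (k + 1) - yg k)‖ ^ 2
        ≤ (μx / 8) * ‖xf (k + 1) + μx⁻¹ • zg k‖ ^ 2 + θy⁻¹ * ‖yf (k + 1) - yg k‖ ^ 2)
    (hzstep : ∀ k < K, z (k + 1)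
        = z k + (ηz * μx⁻¹) • (zf (k + 1) - z k) - ηz • (xf (k + 1) + μx⁻¹ • zf (k + 1)))
    (hystep : ∀ k < K, y (k + 1)
        = y k + (ηy * μy) • (yf (k + 1) - y k) - ηy • (wf (k + 1) + μy • yf (k + 1)))
    -- the saddle point and its optimality conditions
    (xstar : EuclideanSpace ℝ (Fin dx)) (ystar : EuclideanSpace ℝ (Fin dy))
    (hoptx : -(gFx xstar ystar) ∈ SubdiffAt r xstar)
    (hopty : gFy xstar ystar ∈ SubdiffAt g ystar)
    (zstar : EuclideanSpace ℝ (Fin dx)) (hzstar : zstar = -(μx • xstar))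
    (hP0 : Pfun μx μy r g Fh (zf 0) (yf 0) < ⊤)
    (ρ : ℝ) (hρ : ρ = 1 / max (2 / α) (2 * α / (θy * μy)))
    (L0 : EReal)
    (hL0 : L0 = (((1 / ηz) * ‖z 0 - zstar‖ ^ 2 + (1 / ηy) * ‖y 0 - ystar‖ ^ 2 : ℝ) : EReal)
        + ((2 / α : ℝ) : EReal) *
            (Pfun μx μy r g Fh (zf 0) (yf 0) - Pfun μx μy r g Fh zstar ystar)) :
    (((1 / ηz) * ‖z K - zstar‖ ^ 2 + (1 / ηy) * ‖y K - ystar‖ ^ 2 : ℝ) : EReal)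
        ≤ (((1 - ρ) ^ K : ℝ) : EReal) * L0
    ∧ ((‖(-μx⁻¹) • z K - xstar‖ ^ 2 + ‖y K - ystar‖ ^ 2 : ℝ) : EReal)
        ≤ ((max (ηz * (μx⁻¹) ^ 2) ηy : ℝ) : EReal) * L0 * (((1 - ρ) ^ K : ℝ) : EReal) := by
  obtain ⟨hηz₀, hηy₀, hηzμ, hηyμ, hηzθ, hηyθ, hρz, hρy, hρα⟩ :=
    algorithm_stepsizes hμx hμy hα0 hα1 hθy hηz hηy hρ
  have hFx := hatF_add_inner_le hFh hconv
  have hFy := hatF_le_add_inner hFh hconc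
  obtain ⟨pstar, hPstar, hmin⟩ := exists_Pfun_eq_and_forall_le hμx hμy.le (hFx xstar · ystar)
    (hFy xstar ystar) hzstar (by convert hoptx using 1; rw [hzstar]; abel)
    (by convert hopty using 1; abel) (hrbot _) (hgbot _)
  have hiter := fun k (hk : k < K) =>
    exists_Pfun_eq_and_strong_subgradient μx μy (hFx _ · _) (hFy _ _) (hincr k hk) (hincg k hk)
      (hrbot _) (hgbot _)
  have hfin : ∀ k ≤ K, ∃ p : ℝ, Pfun μx μy r g Fh (zf k) (yf k) = p := by
    rintro (_ | k) hk
    · exact ⟨_, (EReal.coe_toReal hP0.ne (ne_bot_of_le_ne_bot (by simp) (hmin _ _))).symm⟩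
    · exact (hiter k hk).imp fun _ h => h.1
  choose! P hP using hfin
  have hPmin : ∀ k ≤ K, pstar ≤ P k := fun k hk => by exact_mod_cast hP k hk ▸ hmin _ _
  set Φ : ℕ → ℝ := fun k =>
    1 / ηz * ‖z k - zstar‖ ^ 2 + 1 / ηy * ‖y k - ystar‖ ^ 2 + 2 / α * (P k - pstar)
  have hstep : ∀ k < K, Φ (k + 1) ≤ (1 - ρ) * Φ k := by
    intro k hk
    obtain ⟨p, hp, hsub⟩ := hiter k hk
    obtain rfl : p = P (k + 1) := EReal.coe_injective (hp.symm.trans (hP _ hk))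
    have hps := EReal.coe_le_coe_iff.1 ((hsub zstar ystar).trans_eq hPstar)
    have hpf := EReal.coe_le_coe_iff.1 ((hsub (zf k) (yf k)).trans_eq (hP k hk.le))
    refine lyapunov_step (inv_nonneg.2 hμx.le) hμy.le hηz₀ hηy₀ hα0 hηzμ hηyμ hηzθ
      hηyθ hρz hρy hρα hα1 (hzg k hk) (hyg k hk) (hzstep k hk) (hystep k hk) ?_ hps ?_
      (hPmin k hk.le)
    · linarith [inexact_residual_le hμx (xf (k + 1)) (zf (k + 1)) (zg k), hinexact k hk]
    · have : 0 ≤ μx⁻¹ / 2 * ‖zf k - zf (k + 1)‖ ^ 2 + μy / 2 * ‖yf k - yf (k + 1)‖ ^ 2 := by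
        positivity
      linarith
  have hzy : 1 / ηz * ‖z K - zstar‖ ^ 2 + 1 / ηy * ‖y K - ystar‖ ^ 2 ≤ (1 - ρ) ^ K * Φ 0 := by
    have hΦK := le_geom (by linarith) K hstep
    have := mul_nonneg (by positivity : (0 : ℝ) ≤ 2 / α) (sub_nonneg.2 (hPmin K le_rfl))
    linarith
  have hL0Φ : L0 = Φ 0 := by rw [hL0, hP 0 K.zero_le, hPstar]; norm_cast
  rw [hL0Φ]
  exact ⟨by exact_mod_cast hzy, by exact_mod_cast
    (norm_sq_add_norm_sq_le_max_mul hμx hηz₀ hηy₀ hzstar hzy).trans_eq (by ring)⟩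

/-- Theorem `pp:thm` in the paper. Linear convergence of the accelerated
proximal point algorithm (Algorithm 2) with inexact proximal steps: with
`η_z = μₓ/2`, `η_y = min{1/(2μ_y), θ_y/(2α)}` and `ρ = 1/max{2/α, 2α/(θ_y μ_y)}`, the iterates
contract at rate `(1 − ρ)` with respect to the Lyapunov function `L⁰`, and in particular
`‖(−μₓ⁻¹ z^K) − x*‖² + ‖y^K − y*‖² ≤ max{η_z μₓ⁻², η_y} · L⁰ · (1 − ρ)^K`. -/
theorem stmt_0 {dx dy : ℕ}
    (F : EuclideanSpace ℝ (Fin dx) → EuclideanSpace ℝ (Fin dy) → ℝ)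
    (gFx : EuclideanSpace ℝ (Fin dx) → EuclideanSpace ℝ (Fin dy) → EuclideanSpace ℝ (Fin dx))
    (gFy : EuclideanSpace ℝ (Fin dx) → EuclideanSpace ℝ (Fin dy) → EuclideanSpace ℝ (Fin dy))
    (μx μy : ℝ) (hμx : 0 < μx) (hμy : 0 < μy)
    (hgFx : ∀ x y, HasGradientAt (fun x' => F x' y) (gFx x y) x)
    (hgFy : ∀ x y, HasGradientAt (fun y' => F x y') (gFy x y) y)
    (hconv : ∀ x1 x2 y, F x2 y ≥ F x1 y + ⟪gFx x1 y, x2 - x1⟫ + μx / 2 * ‖x2 - x1‖ ^ 2)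
    (hconc : ∀ x y1 y2, F x y2 ≤ F x y1 + ⟪gFy x y1, y2 - y1⟫ - μy / 2 * ‖y2 - y1‖ ^ 2)
    (r : EuclideanSpace ℝ (Fin dx) → EReal) (g : EuclideanSpace ℝ (Fin dy) → EReal)
    (hrbot : ∀ x, r x ≠ ⊥) (hgbot : ∀ y, g y ≠ ⊥)
    (hrproper : ∃ x, r x ≠ ⊤) (hgproper : ∃ y, g y ≠ ⊤)
    (hrconv : ERealConvexOn r) (hgconv : ERealConvexOn g)
    (hrlsc : LowerSemicontinuous r) (hglsc : LowerSemicontinuous g)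
    (Fh : EuclideanSpace ℝ (Fin dx) → EuclideanSpace ℝ (Fin dy) → ℝ)
    (hFh : ∀ x y, Fh x y = F x y - μx / 2 * ‖x‖ ^ 2 + μy / 2 * ‖y‖ ^ 2)
    -- parameters of the algorithm
    (α θy ηz ηy : ℝ) (hα0 : 0 < α) (hα1 : α ≤ 1) (hθy : 0 < θy)
    (hηz : ηz = μx / 2) (hηy : ηy = min (1 / (2 * μy)) (θy / (2 * α)))
    (K : ℕ)
    (z zf zg xf : ℕ → EuclideanSpace ℝ (Fin dx))
    (y yf yg wf : ℕ → EuclideanSpace ℝ (Fin dy))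
    (hzg : ∀ k < K, zg k = α • z k + (1 - α) • zf k)
    (hyg : ∀ k < K, yg k = α • y k + (1 - α) • yf k)
    -- `z_f^{k+1} − ∇ₓ F̂(x_f^{k+1}, y_f^{k+1}) ∈ ∂r(x_f^{k+1})`,
    -- with `∇ₓ F̂(x, y) = ∇ₓ F(x, y) − μx x`
    (hincr : ∀ k < K,
      zf (k + 1) - (gFx (xf (k + 1)) (yf (k + 1)) - μx • xf (k + 1))
        ∈ SubdiffAt r (xf (k + 1)))
    -- `w_f^{k+1} + ∇_y F̂(x_f^{k+1}, y_f^{k+1}) ∈ ∂g(y_f^{k+1})`,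
    -- with `∇_y F̂(x, y) = ∇_y F(x, y) + μy y`
    (hincg : ∀ k < K,
      wf (k + 1) + (gFy (xf (k + 1)) (yf (k + 1)) + μy • yf (k + 1))
        ∈ SubdiffAt g (yf (k + 1)))
    (hinexact : ∀ k < K,
      (8 / μx) * ‖zf (k + 1) + (μx / 2) • (xf (k + 1) - μx⁻¹ • zg k)‖ ^ 2
          + θy * ‖wf (k + 1) + μy • yf (k + 1) + θy⁻¹ • (yf (k + 1) - yg k)‖ ^ 2
        ≤ (μx / 8) * ‖xf (k + 1) + μx⁻¹ • zg k‖ ^ 2 + θy⁻¹ * ‖yf (k + 1) - yg k‖ ^ 2)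
    (hzstep : ∀ k < K, z (k + 1)
        = z k + (ηz * μx⁻¹) • (zf (k + 1) - z k) - ηz • (xf (k + 1) + μx⁻¹ • zf (k + 1)))
    (hystep : ∀ k < K, y (k + 1)
        = y k + (ηy * μy) • (yf (k + 1) - y k) - ηy • (wf (k + 1) + μy • yf (k + 1)))
    -- the saddle point and its optimality conditions
    (xstar : EuclideanSpace ℝ (Fin dx)) (ystar : EuclideanSpace ℝ (Fin dy))
    (hoptx : -(gFx xstar ystar) ∈ SubdiffAt r xstar)
    (hopty : gFy xstar ystar ∈ SubdiffAt g ystar)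
    (zstar : EuclideanSpace ℝ (Fin dx)) (hzstar : zstar = -(μx • xstar))
    (hP0 : Pfun μx μy r g Fh (zf 0) (yf 0) < ⊤)
    (ρ : ℝ) (hρ : ρ = 1 / max (2 / α) (2 * α / (θy * μy)))
    (L0 : EReal)
    (hL0 : L0 = (((1 / ηz) * ‖z 0 - zstar‖ ^ 2 + (1 / ηy) * ‖y 0 - ystar‖ ^ 2 : ℝ) : EReal)
        + ((2 / α : ℝ) : EReal) *
            (Pfun μx μy r g Fh (zf 0) (yf 0) - Pfun μx μy r g Fh zstar ystar)) :
    (((1 / ηz) * ‖z K - zstar‖ ^ 2 + (1 / ηy) * ‖y K - ystar‖ ^ 2 : ℝ) : EReal)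
        ≤ (((1 - ρ) ^ K : ℝ) : EReal) * L0
    ∧ ((‖(-μx⁻¹) • z K - xstar‖ ^ 2 + ‖y K - ystar‖ ^ 2 : ℝ) : EReal)
        ≤ ((max (ηz * (μx⁻¹) ^ 2) ηy : ℝ) : EReal) * L0 * (((1 - ρ) ^ K : ℝ) : EReal) :=
  stmt_0_general F gFx gFy μx μy hμx hμy hconv hconc r g hrbot hgbot Fh hFh α θy ηz ηy hα0 hα1 hθy
    hηz hηy K z zf zg xf y yf yg wf hzg hyg hincr hincg hinexact hzstep hystep xstar ystar hoptx
    hopty zstar hzstar hP0 ρ hρ L0 hL0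
end
end

section
/- Let A : ℝ^d → ℝ^d be monotone and M-Lipschitz (M > 0), and let B : ℝ^d ⇉ ℝ^d be a monotone set-valued operator. Set λ = 1/(√5·M) and β_t = 2/(t+3). Let u^{−1} ∈ ℝ^d, and let (u^t)_{t=0}^T, (b^t)_{t=0}^T with b^t ∈ B(u^t) for all t, and intermediate points (u^{t+1/2})_{t=0}^{T−1} satisfy: u^0 = u^{−1} − λ A(u^{−1}) − λ b^0; and for every t = 0, …, T−1: u^{t+1/2} = u^t + β_t(u^0 − u^t) − λ(A(u^t) + b^t) and u^{t+1} = u^t + β_t(u^0 − u^t) − λ A(u^{t+1/2}) − λ b^{t+1}. Assume there exists u* ∈ ℝ^d and b* ∈ B(u*) with A(u*) + b* = 0. Then for T ≥ 1, ‖A(u^T) + b^T‖² ≤ (288 M²/(T+1)²) · ‖u^{−1} − u*‖². -/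
open scoped RealInnerProductSpace

lemma eag_step {E : Type*} [NormedAddCommGroup E] [InnerProductSpace ℝ E]
    (lam τ : ℝ) (hτ : 0 ≤ τ) (hlam : 0 ≤ lam)
    (f g h x x' : E)
    (hx' : x' = x - (2/(τ+3)) • x - lam • g)
    (hmono : 0 ≤ ⟪h - f, x' - x⟫)
    (hlip : ‖g - h‖^2 ≤ (1/5) * ‖g - f‖^2) :
    lam^2 * ((τ+3)*((τ+2)^2+1)/4) * ‖h‖^2 + lam * ((τ+2)*(τ+3)) * ⟪h, x'⟫
      ≤ lam^2 * ((τ+2)*((τ+1)^2+1)/4) * ‖f‖^2 + lam * ((τ+1)*(τ+2)) * ⟪f, x⟫ := by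
  subst hx'
  have hτ3 : (τ+3) ≠ 0 := by positivity
  have e1 : ⟪h, x - (2/(τ+3)) • x - lam • g⟫
      = ⟪h, x⟫ - (2/(τ+3)) * ⟪h, x⟫ - lam * ⟪h, g⟫ := by
    simp [inner_sub_right, real_inner_smul_right]
  have e2 : ⟪h - f, (x - (2/(τ+3)) • x - lam • g) - x⟫
      = -(2/(τ+3)) * ⟪h, x⟫ - lam * ⟪h, g⟫ + (2/(τ+3)) * ⟪f, x⟫ + lam * ⟪f, g⟫ := by
    simp [inner_sub_right, inner_sub_left, real_inner_smul_right]
    ring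
  have e3 : ‖g - h‖^2 = ‖g‖^2 - 2 * ⟪g, h⟫ + ‖h‖^2 := norm_sub_sq_real g h
  have e4 : ‖g - f‖^2 = ‖g‖^2 - 2 * ⟪g, f⟫ + ‖f‖^2 := norm_sub_sq_real g f
  have e5 : ‖(2*τ+1) • f - (2*τ+6) • g‖^2
      = (2*τ+1)^2 * ‖f‖^2 - 2*((2*τ+1)*(2*τ+6)) * ⟪f, g⟫ + (2*τ+6)^2 * ‖g‖^2 := by
    rw [norm_sub_sq_real, real_inner_smul_left, real_inner_smul_right, norm_smul, norm_smul,
      mul_pow, mul_pow]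
    simp [Real.norm_eq_abs, sq_abs]
    ring
  have cgh : ⟪g, h⟫ = ⟪h, g⟫ := real_inner_comm h g
  have cgf : ⟪g, f⟫ = ⟪f, g⟫ := real_inner_comm f g
  have c2 : 0 ≤ (lam*((τ+1)*(τ+2)*(τ+3)/2)) * ⟪h - f, (x - (2/(τ+3)) • x - lam • g) - x⟫ :=
    mul_nonneg (by positivity) hmono
  have c3 : 0 ≤ (lam^2*((τ+2)*(τ+3)^2/4)) * ((1/5)*‖g - f‖^2 - ‖g - h‖^2) :=
    mul_nonneg (by positivity) (by linarith)
  have c4 : 0 ≤ lam^2*((τ+2)/20) * ‖(2*τ+1) • f - (2*τ+6) • g‖^2 := by positivity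
  have c5 : 0 ≤ lam^2*((τ+1)*(τ+3)/4) * ‖h‖^2 := by positivity
  have key : (lam^2 * ((τ+2)*((τ+1)^2+1)/4) * ‖f‖^2 + lam * ((τ+1)*(τ+2)) * ⟪f, x⟫)
      - (lam^2 * ((τ+3)*((τ+2)^2+1)/4) * ‖h‖^2
        + lam * ((τ+2)*(τ+3)) * ⟪h, x - (2/(τ+3)) • x - lam • g⟫)
      = (lam*((τ+1)*(τ+2)*(τ+3)/2)) * ⟪h - f, (x - (2/(τ+3)) • x - lam • g) - x⟫
        + (lam^2*((τ+2)*(τ+3)^2/4)) * ((1/5)*‖g - f‖^2 - ‖g - h‖^2)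
        + lam^2*((τ+2)/20) * ‖(2*τ+1) • f - (2*τ+6) • g‖^2
        + lam^2*((τ+1)*(τ+3)/4) * ‖h‖^2 := by
    rw [e1, e2, e3, e4, e5, cgh, cgf]
    field_simp
    ring
  linarith [c2, c3, c4, c5, key]

set_option maxHeartbeats 3000000 in
lemma eag_crunch (τ z p q R m s : ℝ) (hτ1 : 1 ≤ τ) (hz0 : 0 ≤ z) (hp0 : 0 ≤ p)
    (hq0 : 0 ≤ q) (hR0 : 0 ≤ R) (hm0 : 0 ≤ m) (hs_pos : 0 < s)
    (hms : m * s = 1) (hs2 : s^2 = 5) (hsl : 2.23 ≤ s) (hm2 : m^2 = 1/5)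
    (hi : ((τ+2)*((τ+1)^2+1)/4) * z^2 ≤ (1+m)^2 * q^2 + ((τ+1)*(τ+2)) * z * p)
    (hii : p^2 - 2*m*q*p + q^2 ≤ R^2) :
    5*(τ+1)^2*z^2 ≤ 288*R^2 := by
  have hp2 : p^2 ≤ (5/4)*R^2 := by
    nlinarith [hii, sq_nonneg (q - m*p), hm2, sq_nonneg p]
  have hpR : p ≤ (s/2)*R := by
    have hsr0 : (0:ℝ) ≤ (s/2)*R := mul_nonneg (by positivity) hR0
    have hsq : ((s/2)*R)^2 = (5/4)*R^2 := by linear_combination (R^2/4) * hs2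
    have h15 : p^2 ≤ ((s/2)*R)^2 := hp2.trans_eq hsq.symm
    exact (pow_le_pow_iff_left₀ hp0 hsr0 (by norm_num)).mp h15
  have hqR : q ≤ (3/2)*R := by
    have h7 : (q - m*p)^2 ≤ R^2 := by nlinarith [hii, hm2, sq_nonneg p]
    have h8 : q - m*p ≤ R := by nlinarith [h7, hR0]
    have h9 : m*p ≤ (1/2)*R := by
      have h10 := mul_le_mul_of_nonneg_left hpR hm0
      have h11 : m*((s/2)*R) = (1/2)*R := by linear_combination (R/2) * hms
      linarith
    linarith
  have hq2 : q^2 ≤ (9/4)*R^2 := by nlinarith [hqR, hR0, hq0]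
  have hC : (1+m)^2 ≤ 21/10 := by nlinarith [hms, hsl, hm0, hm2]
  have key1 : ((τ+2)*((τ+1)^2+1)/4)^2 * z^2
      ≤ ((τ+1)*(τ+2))^2 * p^2 + (21/5)*((τ+2)*((τ+1)^2+1)/4) * q^2 := by
    have h10 := mul_le_mul_of_nonneg_left hi
      (by positivity : (0:ℝ) ≤ 2*((τ+2)*((τ+1)^2+1)/4))
    have h11 := mul_le_mul_of_nonneg_right hC
      (by positivity : (0:ℝ) ≤ 2*((τ+2)*((τ+1)^2+1)/4) * q^2)
    nlinarith [h10, h11, sq_nonneg (((τ+2)*((τ+1)^2+1)/4) * z - ((τ+1)*(τ+2)) * p)]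
  have hpoly : (25/4)*(τ+1)^2*((τ+1)*(τ+2))^2 + (189/4)*(τ+1)^2*((τ+2)*((τ+1)^2+1)/4)
      ≤ 288*(((τ+2)*((τ+1)^2+1)/4))^2 := by
    nlinarith [hτ1, sq_nonneg (τ-1), sq_nonneg (τ+1), sq_nonneg ((τ+1)^2)]
  have key2 : 5*(τ+1)^2*(((τ+1)*(τ+2))^2 * p^2 + (21/5)*((τ+2)*((τ+1)^2+1)/4) * q^2)
      ≤ 288*R^2*(((τ+2)*((τ+1)^2+1)/4))^2 := by
    have k2a := mul_le_mul_of_nonneg_left hp2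
      (by positivity : (0:ℝ) ≤ 5*(τ+1)^2*((τ+1)*(τ+2))^2)
    have k2b := mul_le_mul_of_nonneg_left hq2
      (by positivity : (0:ℝ) ≤ 5*(τ+1)^2*((21/5)*((τ+2)*((τ+1)^2+1)/4)))
    have k2c := mul_le_mul_of_nonneg_right hpoly (sq_nonneg R)
    nlinarith [k2a, k2b, k2c]
  have h12 : (5*(τ+1)^2*z^2) * (((τ+2)*((τ+1)^2+1)/4))^2
      ≤ (288*R^2) * (((τ+2)*((τ+1)^2+1)/4))^2 := by
    nlinarith [mul_le_mul_of_nonneg_left key1 (by positivity : (0:ℝ) ≤ 5*(τ+1)^2), key2]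
  exact le_of_mul_le_mul_right h12 (by positivity)

set_option maxHeartbeats 2000000 in
/-- Convergence of the Extra Anchored Gradient algorithm for composite
monotone inclusions (Theorem `eag:thm` in the paper): with `λ = 1/(√5 M)` and
`β_t = 2/(t+3)`, the iterates satisfy
`‖A(u^T) + b^T‖² ≤ (288 M²/(T+1)²) ‖u^{−1} − u*‖²`. -/
theorem stmt_1 {d : ℕ} (M : ℝ) (hM : 0 < M)
    (A : EuclideanSpace ℝ (Fin d) → EuclideanSpace ℝ (Fin d))
    (hAmono : ∀ u1 u2, 0 ≤ ⟪A u1 - A u2, u1 - u2⟫)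
    (hAlip : ∀ u1 u2, ‖A u1 - A u2‖ ≤ M * ‖u1 - u2‖)
    (B : EuclideanSpace ℝ (Fin d) → Set (EuclideanSpace ℝ (Fin d)))
    (hBmono : ∀ u1 u2, ∀ b1 ∈ B u1, ∀ b2 ∈ B u2, 0 ≤ ⟪b1 - b2, u1 - u2⟫)
    (lam : ℝ) (hlam : lam = 1 / (Real.sqrt 5 * M))
    (β : ℕ → ℝ) (hβ : ∀ t, β t = 2 / ((t : ℝ) + 3))
    (T : ℕ) (hT : 1 ≤ T)
    (um1 : EuclideanSpace ℝ (Fin d))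
    (u b uh : ℕ → EuclideanSpace ℝ (Fin d))
    (hb : ∀ t ≤ T, b t ∈ B (u t))
    (hu0 : u 0 = um1 - lam • A um1 - lam • b 0)
    (hhalf : ∀ t < T, uh t = u t + β t • (u 0 - u t) - lam • (A (u t) + b t))
    (hnext : ∀ t < T, u (t + 1) = u t + β t • (u 0 - u t) - lam • A (uh t) - lam • b (t + 1))
    (ustar bstar : EuclideanSpace ℝ (Fin d))
    (hbstar : bstar ∈ B ustar) (hsol : A ustar + bstar = 0) :
    ‖A (u T) + b T‖ ^ 2 ≤ 288 * M ^ 2 / ((T : ℝ) + 1) ^ 2 * ‖um1 - ustar‖ ^ 2 := by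
  set s : ℝ := Real.sqrt 5 with hs
  have hs_pos : 0 < s := by rw [hs]; positivity
  have hs2 : s^2 = 5 := Real.sq_sqrt (by norm_num)
  have hsl : 2.23 ≤ s := by nlinarith
  have hsu : s ≤ 2.25 := by nlinarith
  have hlam_pos : 0 < lam := by rw [hlam]; positivity
  have hmeq : lam * M = 1/s := by rw [hlam]; field_simp
  have hm2 : (lam*M)^2 = 1/5 := by rw [hmeq, div_pow, one_pow, hs2]
  have hl2 : lam^2 * M^2 = 1/5 := by rw [← mul_pow]; exact hm2
  -- combined monotonicity
  have hmonoF : ∀ v w bv bw, bv ∈ B v → bw ∈ B w →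
      0 ≤ ⟪(A v + bv) - (A w + bw), v - w⟫ := by
    intro v w bv bw hv hw
    have h1 := hAmono v w
    have h2 := hBmono v w bv hv bw hw
    have e : (A v + bv) - (A w + bw) = (A v - A w) + (bv - bw) := by abel
    rw [e, inner_add_left]
    linarith
  -- one-step Lyapunov descent
  have hstep : ∀ t, t < T →
      lam^2 * ((((t:ℝ)+1)+2)*(((t:ℝ)+1+1)^2+1)/4) * ‖A (u (t+1)) + b (t+1)‖^2
        + lam * ((((t:ℝ)+1)+1)*(((t:ℝ)+1)+2)) * ⟪A (u (t+1)) + b (t+1), u (t+1) - u 0⟫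
      ≤ lam^2 * (((t:ℝ)+2)*(((t:ℝ)+1)^2+1)/4) * ‖A (u t) + b t‖^2
        + lam * (((t:ℝ)+1)*((t:ℝ)+2)) * ⟪A (u t) + b t, u t - u 0⟫ := by
    intro t ht
    set τ : ℝ := (t:ℝ) with hτdef
    have hτ0 : (0:ℝ) ≤ τ := by positivity
    set f := A (u t) + b t with hf
    set g := A (uh t) + b (t+1) with hg
    set h := A (u (t+1)) + b (t+1) with hh
    have hG : u (t+1) = u t + β t • (u 0 - u t) - lam • g := by
      rw [hnext t ht, hg, smul_add]; module
    have hx' : u (t+1) - u 0 = (u t - u 0) - (2/(τ+3)) • (u t - u 0) - lam • g := by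
      rw [hG, hβ t]; module
    have hm1 : 0 ≤ ⟪h - f, (u (t+1) - u 0) - (u t - u 0)⟫ := by
      have e : (u (t+1) - u 0) - (u t - u 0) = u (t+1) - u t := by abel
      rw [e]
      exact hmonoF (u (t+1)) (u t) (b (t+1)) (b t) (hb (t+1) ht) (hb t (le_of_lt ht))
    have hlip1 : ‖g - h‖^2 ≤ (1/5) * ‖g - f‖^2 := by
      have hd1 : g - h = A (uh t) - A (u (t+1)) := by rw [hg, hh]; abel
      have hd2 : uh t - u (t+1) = lam • (g - f) := by
        rw [hhalf t ht, hnext t ht, hg, hf]; module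
      have h3 : ‖g - h‖ ≤ M * (lam * ‖g - f‖) := by
        rw [hd1]
        calc ‖A (uh t) - A (u (t+1))‖ ≤ M * ‖uh t - u (t+1)‖ := hAlip _ _
          _ = M * (lam * ‖g - f‖) := by
              rw [hd2, norm_smul, Real.norm_eq_abs, abs_of_pos hlam_pos]
      have h4 : ‖g - h‖^2 ≤ (M * (lam * ‖g - f‖))^2 := by
        have := norm_nonneg (g - h); nlinarith
      calc ‖g - h‖^2 ≤ (M * (lam * ‖g - f‖))^2 := h4
        _ = (lam^2 * M^2) * ‖g - f‖^2 := by ring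
        _ = (1/5) * ‖g - f‖^2 := by rw [hl2]
    have := eag_step lam τ hτ0 hlam_pos.le f g h (u t - u 0) (u (t+1) - u 0) hx' hm1 hlip1
    calc lam^2 * ((τ+1+2)*((τ+1+1)^2+1)/4) * ‖h‖^2 + lam * ((τ+1+1)*(τ+1+2)) * ⟪h, u (t+1) - u 0⟫
        = lam^2 * ((τ+3)*((τ+2)^2+1)/4) * ‖h‖^2 + lam * ((τ+2)*(τ+3)) * ⟪h, u (t+1) - u 0⟫ := by
          ring_nf
      _ ≤ lam^2 * ((τ+2)*((τ+1)^2+1)/4) * ‖f‖^2 + lam * ((τ+1)*(τ+2)) * ⟪f, u t - u 0⟫ := this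
  -- telescoped Lyapunov bound
  have hV : ∀ t, t ≤ T →
      lam^2 * (((t:ℝ)+2)*(((t:ℝ)+1)^2+1)/4) * ‖A (u t) + b t‖^2
        + lam * (((t:ℝ)+1)*((t:ℝ)+2)) * ⟪A (u t) + b t, u t - u 0⟫
      ≤ lam^2 * ‖A (u 0) + b 0‖^2 := by
    intro t
    induction t with
    | zero =>
        intro _
        simp only [Nat.cast_zero, sub_self, inner_zero_right]
        norm_num
    | succ n ih =>
        intro hn
        have hnT : n < T := Nat.lt_of_succ_le hn
        have h1 := hstep n hnT
        have h2 := ih (le_of_lt hnT)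
        have hc : ((n+1 : ℕ) : ℝ) = (n:ℝ) + 1 := by push_cast; ring
        rw [hc]
        linarith
  -- ===== endgame =====
  have hVT := hV T le_rfl
  have hτ1 : (1:ℝ) ≤ (T:ℝ) := by exact_mod_cast hT
  have hY0 : (0:ℝ) ≤ ‖A (u T) + b T‖ := norm_nonneg _
  have hR0 : (0:ℝ) ≤ ‖um1 - ustar‖ := norm_nonneg _
  have hp0 : (0:ℝ) ≤ ‖u 0 - ustar‖ := norm_nonneg _
  have hG0 : (0:ℝ) ≤ ‖A um1 + b 0‖ := norm_nonneg _
  have hmnn : (0:ℝ) ≤ lam * M := by positivity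
  -- solution monotonicity at time T and time 0
  have hsolT : 0 ≤ ⟪A (u T) + b T, u T - ustar⟫ := by
    have := hmonoF (u T) ustar (b T) bstar (hb T le_rfl) hbstar
    rwa [hsol, sub_zero] at this
  have hmono0 : 0 ≤ ⟪A (u 0) + b 0, u 0 - ustar⟫ := by
    have := hmonoF (u 0) ustar (b 0) bstar (hb 0 (Nat.zero_le T)) hbstar
    rwa [hsol, sub_zero] at this
  -- lower bound for the anchor inner product at time T
  have hiT : -(‖A (u T) + b T‖ * ‖u 0 - ustar‖) ≤ ⟪A (u T) + b T, u T - u 0⟫ := by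
    have hsplit : ⟪A (u T) + b T, u T - u 0⟫
        = ⟪A (u T) + b T, u T - ustar⟫ + ⟪A (u T) + b T, ustar - u 0⟫ := by
      rw [← inner_add_right]; congr 1; abel
    have h1 := abs_real_inner_le_norm (A (u T) + b T) (ustar - u 0)
    have h2 : ‖ustar - u 0‖ = ‖u 0 - ustar‖ := norm_sub_rev _ _
    have h3 := neg_abs_le ⟪A (u T) + b T, ustar - u 0⟫
    rw [h2] at h1
    rw [hsplit]
    linarith
  -- initial step facts
  have hGm1 : um1 - u 0 = lam • (A um1 + b 0) := by rw [hu0]; module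
  have hGF0 : ‖(A um1 + b 0) - (A (u 0) + b 0)‖ ≤ (lam*M) * ‖A um1 + b 0‖ := by
    have e : (A um1 + b 0) - (A (u 0) + b 0) = A um1 - A (u 0) := by abel
    rw [e]
    calc ‖A um1 - A (u 0)‖ ≤ M * ‖um1 - u 0‖ := hAlip _ _
      _ = (lam*M) * ‖A um1 + b 0‖ := by
          rw [hGm1, norm_smul, Real.norm_eq_abs, abs_of_pos hlam_pos]; ring
  have hF0 : lam * ‖A (u 0) + b 0‖ ≤ (1 + lam*M) * (lam * ‖A um1 + b 0‖) := by
    have h1 := norm_sub_norm_le (A (u 0) + b 0) (A um1 + b 0)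
    have h2 : ‖(A (u 0) + b 0) - (A um1 + b 0)‖ = ‖(A um1 + b 0) - (A (u 0) + b 0)‖ :=
      norm_sub_rev _ _
    have h3 : ‖A (u 0) + b 0‖ ≤ (1 + lam*M) * ‖A um1 + b 0‖ := by
      rw [h2] at h1; nlinarith [hGF0]
    nlinarith [mul_le_mul_of_nonneg_left h3 hlam_pos.le]
  -- inequality (ii) : p² - 2 m q p + q² ≤ R²
  have hii : ‖u 0 - ustar‖^2 - 2*(lam*M)*(lam*‖A um1 + b 0‖)*‖u 0 - ustar‖
      + (lam*‖A um1 + b 0‖)^2 ≤ ‖um1 - ustar‖^2 := by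
    have e : um1 - ustar = (u 0 - ustar) + lam • (A um1 + b 0) := by rw [hu0]; module
    have hnorm : ‖um1 - ustar‖^2 = ‖u 0 - ustar‖^2
        + 2*⟪u 0 - ustar, lam • (A um1 + b 0)⟫ + (lam*‖A um1 + b 0‖)^2 := by
      rw [e, norm_add_sq_real, norm_smul, Real.norm_eq_abs, abs_of_pos hlam_pos]
    have hsm : ⟪u 0 - ustar, lam • (A um1 + b 0)⟫ = lam * ⟪u 0 - ustar, A um1 + b 0⟫ :=
      real_inner_smul_right _ _ _
    have hsplit0 : ⟪u 0 - ustar, A um1 + b 0⟫ = ⟪u 0 - ustar, A (u 0) + b 0⟫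
        + ⟪u 0 - ustar, (A um1 + b 0) - (A (u 0) + b 0)⟫ := by
      rw [← inner_add_right]; congr 1; abel
    have hA0 : ⟪u 0 - ustar, A (u 0) + b 0⟫ = ⟪A (u 0) + b 0, u 0 - ustar⟫ :=
      real_inner_comm _ _
    have hB0 : -(((lam*M) * ‖A um1 + b 0‖) * ‖u 0 - ustar‖)
        ≤ ⟪u 0 - ustar, (A um1 + b 0) - (A (u 0) + b 0)⟫ := by
      have h1 := abs_real_inner_le_norm (u 0 - ustar) ((A um1 + b 0) - (A (u 0) + b 0))
      have h3 := neg_abs_le ⟪u 0 - ustar, (A um1 + b 0) - (A (u 0) + b 0)⟫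
      nlinarith [mul_le_mul_of_nonneg_left hGF0 hp0]
    have h4 : -((lam*M) * (lam*‖A um1 + b 0‖) * ‖u 0 - ustar‖)
        ≤ lam * ⟪u 0 - ustar, A um1 + b 0⟫ := by
      rw [hsplit0, hA0]
      nlinarith [mul_le_mul_of_nonneg_left hB0 hlam_pos.le,
        mul_le_mul_of_nonneg_left hmono0 hlam_pos.le]
    rw [hnorm, hsm]
    linarith
  -- inequality (i)
  have hi : (((T:ℝ)+2)*(((T:ℝ)+1)^2+1)/4) * (lam*‖A (u T) + b T‖)^2
      ≤ (1+lam*M)^2 * (lam*‖A um1 + b 0‖)^2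
        + (((T:ℝ)+1)*((T:ℝ)+2)) * (lam*‖A (u T) + b T‖) * ‖u 0 - ustar‖ := by
    have hcT0 : (0:ℝ) ≤ lam*(((T:ℝ)+1)*((T:ℝ)+2)) := by positivity
    have h5 := mul_le_mul_of_nonneg_left hiT hcT0
    have h6 : (lam * ‖A (u 0) + b 0‖)^2 ≤ ((1 + lam*M) * (lam * ‖A um1 + b 0‖))^2 := by
      have hnn : (0:ℝ) ≤ lam * ‖A (u 0) + b 0‖ := by positivity
      nlinarith [hF0]
    nlinarith [hVT, h5, h6]
  -- scalar crunch
  have hms : (lam*M)*s = 1 := by rw [hmeq]; field_simp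
  have hfin : 5*((T:ℝ)+1)^2*(lam*‖A (u T) + b T‖)^2 ≤ 288*‖um1 - ustar‖^2 :=
    eag_crunch ((T:ℝ)) (lam*‖A (u T) + b T‖) ‖u 0 - ustar‖ (lam*‖A um1 + b 0‖)
      ‖um1 - ustar‖ (lam*M) s hτ1 (by positivity) hp0 (by positivity) hR0 hmnn hs_pos
      hms hs2 hsl hm2 hi hii
  -- conclusion
  rw [div_mul_eq_mul_div, le_div_iff₀ (by positivity)]
  have h14 : ‖A (u T) + b T‖^2*((T:ℝ)+1)^2
      = (5*((T:ℝ)+1)^2*(lam*‖A (u T) + b T‖)^2)*M^2 := by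
    linear_combination (-(5*((T:ℝ)+1)^2*‖A (u T) + b T‖^2)) * hl2
  have h13 := mul_le_mul_of_nonneg_right hfin (sq_nonneg M)
  calc ‖A (u T) + b T‖^2*((T:ℝ)+1)^2
      = (5*((T:ℝ)+1)^2*(lam*‖A (u T) + b T‖)^2)*M^2 := h14
    _ ≤ (288*‖um1 - ustar‖^2)*M^2 := h13
    _ = 288*M^2*‖um1 - ustar‖^2 := by ring
end

section
/- Let z, x ∈ ℝ^{d_x} and y, w ∈ ℝ^{d_y} be vectors satisfying z − ∇_x F̂(x, y) ∈ ∂r(x) and w + ∇_y F̂(x, y) ∈ ∂g(y). Then G(z, y) = ⟨z, x⟩ − r(x) − F̂(x, y) + g(y), and (x, w) is a subgradient of G at (z, y), i.e., for all (z̄, ȳ) ∈ ℝ^{d_x} × ℝ^{d_y}: G(z̄, ȳ) ≥ G(z, y) + ⟨x, z̄ − z⟩ + ⟨w, ȳ − y⟩. -/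
open scoped RealInnerProductSpace

noncomputable section

/-- Lemma `lem:subdifferential` in the paper. If
`z − ∇ₓ F̂(x, y) ∈ ∂r(x)` and `w + ∇_y F̂(x, y) ∈ ∂g(y)`, then
`G(z, y) = ⟪z, x⟫ − r(x) − F̂(x, y) + g(y)` and `(x, w) ∈ ∂G(z, y)`. -/
theorem stmt_2 {dx dy : ℕ}
    (F : EuclideanSpace ℝ (Fin dx) → EuclideanSpace ℝ (Fin dy) → ℝ)
    (gFx : EuclideanSpace ℝ (Fin dx) → EuclideanSpace ℝ (Fin dy) → EuclideanSpace ℝ (Fin dx))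
    (gFy : EuclideanSpace ℝ (Fin dx) → EuclideanSpace ℝ (Fin dy) → EuclideanSpace ℝ (Fin dy))
    (μx μy : ℝ) (hμx : 0 < μx) (hμy : 0 < μy)
    (hgFx : ∀ x y, HasGradientAt (fun x' => F x' y) (gFx x y) x)
    (hgFy : ∀ x y, HasGradientAt (fun y' => F x y') (gFy x y) y)
    (hconv : ∀ x1 x2 y, F x2 y ≥ F x1 y + ⟪gFx x1 y, x2 - x1⟫ + μx / 2 * ‖x2 - x1‖ ^ 2)
    (hconc : ∀ x y1 y2, F x y2 ≤ F x y1 + ⟪gFy x y1, y2 - y1⟫ - μy / 2 * ‖y2 - y1‖ ^ 2)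
    (r : EuclideanSpace ℝ (Fin dx) → EReal) (g : EuclideanSpace ℝ (Fin dy) → EReal)
    (hrbot : ∀ x, r x ≠ ⊥) (hgbot : ∀ y, g y ≠ ⊥)
    (hrproper : ∃ x, r x ≠ ⊤) (hgproper : ∃ y, g y ≠ ⊤)
    (hrconv : ERealConvexOn r) (hgconv : ERealConvexOn g)
    (hrlsc : LowerSemicontinuous r) (hglsc : LowerSemicontinuous g)
    (Fh : EuclideanSpace ℝ (Fin dx) → EuclideanSpace ℝ (Fin dy) → ℝ)
    (hFh : ∀ x y, Fh x y = F x y - μx / 2 * ‖x‖ ^ 2 + μy / 2 * ‖y‖ ^ 2)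
    (z x : EuclideanSpace ℝ (Fin dx)) (y w : EuclideanSpace ℝ (Fin dy))
    -- `∇ₓ F̂(x, y) = ∇ₓ F(x, y) − μx x` and `∇_y F̂(x, y) = ∇_y F(x, y) + μy y`
    (hzsub : z - (gFx x y - μx • x) ∈ SubdiffAt r x)
    (hwsub : w + (gFy x y + μy • y) ∈ SubdiffAt g y) :
    conjG r g Fh z y = ((⟪z, x⟫ : ℝ) : EReal) - r x - ((Fh x y : ℝ) : EReal) + g y
    ∧ ∀ (zb : EuclideanSpace ℝ (Fin dx)) (yb : EuclideanSpace ℝ (Fin dy)),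
        conjG r g Fh z y + ((⟪x, zb - z⟫ + ⟪w, yb - y⟫ : ℝ) : EReal) ≤ conjG r g Fh zb yb := by
  obtain ⟨hrx_top, hzs⟩ := hzsub
  obtain ⟨hgy_top, hws⟩ := hwsub
  set Rx := (r x).toReal with hRxdef
  have hRx : r x = (Rx : EReal) := (EReal.coe_toReal (ne_of_lt hrx_top) (hrbot x)).symm
  set Gy := (g y).toReal with hGydef
  have hGy : g y = (Gy : EReal) := (EReal.coe_toReal (ne_of_lt hgy_top) (hgbot y)).symm
  -- real inequality for the x-part
  have keyA : ∀ x' : EuclideanSpace ℝ (Fin dx), ∀ R' : ℝ, r x' = (R' : EReal) →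
      ⟪x', z⟫ - R' - Fh x' y ≤ ⟪z, x⟫ - Rx - Fh x y := by
    intro x' R' hR'
    have h1 := hzs x'
    rw [hRx, hR'] at h1
    have h1' : Rx + ⟪z - (gFx x y - μx • x), x' - x⟫ ≤ R' := by exact_mod_cast h1
    have e1 : ⟪z - (gFx x y - μx • x), x' - x⟫
        = (⟪z, x'⟫ - ⟪z, x⟫) - ⟪gFx x y, x' - x⟫ + μx * (⟪x, x'⟫ - ‖x‖ ^ 2) := by
      simp only [inner_sub_left, real_inner_smul_left, inner_sub_right,
        real_inner_self_eq_norm_sq]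
      ring
    rw [e1] at h1'
    have h2 := hconv x x' y
    have e2 : ‖x' - x‖ ^ 2 = ‖x'‖ ^ 2 - 2 * ⟪x, x'⟫ + ‖x‖ ^ 2 := by
      rw [norm_sub_sq_real, real_inner_comm]
    rw [e2] at h2
    have e3 : (⟪x', z⟫ : ℝ) = ⟪z, x'⟫ := (real_inner_comm x' z).symm
    rw [e3, hFh, hFh]
    nlinarith [h1', h2]
  -- real inequality for the y-part
  have keyB : ∀ yb : EuclideanSpace ℝ (Fin dy), ∀ G' : ℝ, g yb = (G' : EReal) →
      Gy + ⟪w, yb - y⟫ + Fh x yb - Fh x y ≤ G' := by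
    intro yb G' hG'
    have h1 := hws yb
    rw [hGy, hG'] at h1
    have h1' : Gy + ⟪w + (gFy x y + μy • y), yb - y⟫ ≤ G' := by exact_mod_cast h1
    have e1 : ⟪w + (gFy x y + μy • y), yb - y⟫
        = ⟪w, yb - y⟫ + ⟪gFy x y, yb - y⟫ + μy * (⟪y, yb⟫ - ‖y‖ ^ 2) := by
      simp only [inner_add_left, real_inner_smul_left, inner_sub_right,
        real_inner_self_eq_norm_sq]
      ring
    rw [e1] at h1'
    have h2 := hconc x y yb
    have e2 : ‖yb - y‖ ^ 2 = ‖yb‖ ^ 2 - 2 * ⟪y, yb⟫ + ‖y‖ ^ 2 := by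
      rw [norm_sub_sq_real, real_inner_comm]
    rw [e2] at h2
    rw [hFh, hFh]
    nlinarith [h1', h2]
  -- Part 1 : the supremum is attained at x
  have part1 : conjG r g Fh z y
      = ((⟪z, x⟫ : ℝ) : EReal) - r x - ((Fh x y : ℝ) : EReal) + g y := by
    apply le_antisymm
    · apply iSup_le
      intro x'
      rw [hRx, hGy]
      by_cases hx' : r x' = ⊤
      · rw [hx']
        rw [EReal.sub_top]
        simp
      · have hR' : r x' = (((r x').toReal : ℝ) : EReal) :=
          (EReal.coe_toReal hx' (hrbot x')).symm
        rw [hR']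
        norm_cast
        have := keyA x' _ hR'
        linarith
    · have hx : (((⟪x, z⟫ : ℝ) : EReal) - r x - ((Fh x y : ℝ) : EReal) + g y)
          ≤ conjG r g Fh z y := le_iSup (fun x' : EuclideanSpace ℝ (Fin dx) =>
            ((⟪x', z⟫ : ℝ) : EReal) - r x' - ((Fh x' y : ℝ) : EReal) + g y) x
      have e3 : (⟪z, x⟫ : ℝ) = ⟪x, z⟫ := (real_inner_comm z x).symm
      rw [e3]
      exact hx
  refine ⟨part1, ?_⟩
  intro zb yb
  rw [part1, hRx, hGy]
  have hterm : (((⟪x, zb⟫ : ℝ) : EReal) - r x - ((Fh x yb : ℝ) : EReal) + g yb)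
      ≤ conjG r g Fh zb yb := le_iSup (fun x' : EuclideanSpace ℝ (Fin dx) =>
        ((⟪x', zb⟫ : ℝ) : EReal) - r x' - ((Fh x' yb : ℝ) : EReal) + g yb) x
  refine le_trans ?_ hterm
  rw [hRx]
  by_cases hyb : g yb = ⊤
  · rw [hyb]
    have : (((⟪x, zb⟫ : ℝ) : EReal) - (Rx : EReal) - ((Fh x yb : ℝ) : EReal)) + ⊤ = ⊤ := by
      norm_cast
    rw [this]
    exact le_top
  · have hG' : g yb = (((g yb).toReal : ℝ) : EReal) :=
      (EReal.coe_toReal hyb (hgbot yb)).symm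
    rw [hG']
    norm_cast
    have hB := keyB yb _ hG'
    have e4 : (⟪x, zb - z⟫ : ℝ) = ⟪x, zb⟫ - ⟪x, z⟫ := inner_sub_right x zb z
    have e5 : (⟪z, x⟫ : ℝ) = ⟪x, z⟫ := (real_inner_comm z x).symm
    linarith [hB]
end
end

section
/- Suppose (x*, y*) ∈ ℝ^{d_x} × ℝ^{d_y} satisfies the first-order optimality conditions −∇_x F(x*, y*) ∈ ∂r(x*) and ∇_y F(x*, y*) ∈ ∂g(y*). Then the pair (z*, y*) with z* = −μ_x x* is the unique global minimizer of P over ℝ^{d_x} × ℝ^{d_y}, i.e., P(z*, y*) ≤ P(z, y) for all (z, y), with equality only when (z, y) = (z*, y*). -/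
open scoped RealInnerProductSpace

noncomputable section

/-! With `r x* = a` and `g y* = b`, put `P* = b - a - F(x*, y*)`. After completing the square in
`x`, the subgradient inequality for `r` and the strong convexity of `F(·, y*)` say that `x*` attains
the supremum defining `G(z*, y*)`, whence `P(z*, y*) ≤ P*`. Conversely, testing the supremum
defining `G(z, y)` at `x*` and using the subgradient inequality for `g` and the strong concavity of
`F(x*, ·)` gives `P(z, y) ≥ P* + ‖z - z*‖² / (2μₓ) + (μ_y / 2) ‖y - y*‖²`. -/

section InnerProductSpace

variable {E : Type*} [NormedAddCommGroup E] [InnerProductSpace ℝ E]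

theorem exists_eq_coe_of_mem_subdiffAt {h : E → EReal} {x p : E} (hp : p ∈ SubdiffAt h x)
    (hbot : h x ≠ ⊥) : ∃ a : ℝ, h x = a :=
  ⟨(h x).toReal, (EReal.coe_toReal hp.1.ne hbot).symm⟩

theorem coe_add_inner_le_of_mem_subdiffAt {h : E → EReal} {x p : E} {a : ℝ}
    (hp : p ∈ SubdiffAt h x) (ha : h x = a) (x' : E) : ((a + ⟪p, x' - x⟫ : ℝ) : EReal) ≤ h x' := by
  simpa only [ha, EReal.coe_add] using hp.2 x'

theorem inner_neg_smul_add_half_mul_norm_sq (μ : ℝ) (x x₀ : E) :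
    ⟪x, -(μ • x₀)⟫ + μ / 2 * ‖x‖ ^ 2 = μ / 2 * ‖x - x₀‖ ^ 2 - μ / 2 * ‖x₀‖ ^ 2 := by
  rw [inner_neg_right, real_inner_smul_right, norm_sub_sq_real]
  ring

theorem one_div_two_mul_norm_add_smul_sq {μ : ℝ} (hμ : μ ≠ 0) (z x₀ : E) :
    1 / (2 * μ) * ‖z + μ • x₀‖ ^ 2 = 1 / (2 * μ) * ‖z‖ ^ 2 + ⟪x₀, z⟫ + μ / 2 * ‖x₀‖ ^ 2 := by
  rw [norm_add_sq_real, real_inner_smul_right, norm_smul, mul_pow, Real.norm_eq_abs, sq_abs,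
    real_inner_comm]
  field_simp

end InnerProductSpace

theorem unique_minimizer_of_coe_add_le {α : Type*} {f : α → EReal} {q : α → ℝ} {a : α} {m : ℝ}
    (hq : ∀ x, 0 ≤ q x) (hq_eq_zero : ∀ x, q x = 0 → x = a) (hfa : f a ≤ m)
    (hf : ∀ x, ((m + q x : ℝ) : EReal) ≤ f x) :
    (∀ x, f a ≤ f x) ∧ ∀ x, f x = f a → x = a := by
  have hm (x) : (m : EReal) ≤ f x :=
    (EReal.coe_le_coe_iff.2 (le_add_of_nonneg_right (hq x))).trans (hf x)
  have hfa_eq : f a = m := le_antisymm hfa (hm a)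
  refine ⟨fun x => hfa_eq ▸ hm x, fun x hx => hq_eq_zero x ?_⟩
  have := hf x
  rw [hx, hfa_eq, EReal.coe_le_coe_iff] at this
  linarith [hq x]

section SaddleSolution

variable {X Y : Type*} [NormedAddCommGroup X] [InnerProductSpace ℝ X]
  [NormedAddCommGroup Y] [InnerProductSpace ℝ Y]
  {F Fh : X → Y → ℝ} {μx μy : ℝ} {r : X → EReal} {g : Y → EReal} {x₀ : X} {y₀ : Y} {a b : ℝ}

theorem Pfun_le_of_mem_subdiffAt (hμx : μx ≠ 0)
    (hFh : ∀ x y, Fh x y = F x y - μx / 2 * ‖x‖ ^ 2 + μy / 2 * ‖y‖ ^ 2) {p : X}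
    (hconv : ∀ x, F x₀ y₀ + ⟪p, x - x₀⟫ + μx / 2 * ‖x - x₀‖ ^ 2 ≤ F x y₀)
    (hr : -p ∈ SubdiffAt r x₀) (ha : r x₀ = a) (hb : g y₀ = b) :
    Pfun μx μy r g Fh (-(μx • x₀)) y₀ ≤ ((b - a - F x₀ y₀ : ℝ) : EReal) := by
  set z₀ := -(μx • x₀)
  set c := 1 / (2 * μx) * ‖z₀‖ ^ 2 + μy / 2 * ‖y₀‖ ^ 2 with hc
  have hsummand (x : X) : ((⟪x, z₀⟫ : ℝ) : EReal) - r x - (Fh x y₀ : EReal) + g y₀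
      ≤ ((b - a - F x₀ y₀ - c : ℝ) : EReal) := by
    calc _ ≤ ((⟪x, z₀⟫ - (a + ⟪-p, x - x₀⟫) - Fh x y₀ + b : ℝ) : EReal) := by
          rw [hb, EReal.coe_add, EReal.coe_sub, EReal.coe_sub]
          exact add_le_add_left (EReal.sub_le_sub
            (EReal.sub_le_sub le_rfl (coe_add_inner_le_of_mem_subdiffAt hr ha x)) le_rfl) _
      _ ≤ _ := by
          have hz₀ : 1 / (2 * μx) * ‖z₀‖ ^ 2 = μx / 2 * ‖x₀‖ ^ 2 := by
            rw [norm_neg, norm_smul, mul_pow, Real.norm_eq_abs, sq_abs]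
            field_simp
          rw [EReal.coe_le_coe_iff, hFh, inner_neg_left]
          linarith [inner_neg_smul_add_half_mul_norm_sq μx x x₀, hconv x, hc]
  calc Pfun μx μy r g Fh z₀ y₀ ≤ (c : EReal) + ((b - a - F x₀ y₀ - c : ℝ) : EReal) :=
        add_le_add_right (iSup_le hsummand) _
    _ = ((b - a - F x₀ y₀ : ℝ) : EReal) := by rw [← EReal.coe_add, add_sub_cancel]

theorem coe_add_le_Pfun_of_mem_subdiffAt (hμx : μx ≠ 0)
    (hFh : ∀ x y, Fh x y = F x y - μx / 2 * ‖x‖ ^ 2 + μy / 2 * ‖y‖ ^ 2) {q : Y}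
    (hconc : ∀ y, F x₀ y ≤ F x₀ y₀ + ⟪q, y - y₀⟫ - μy / 2 * ‖y - y₀‖ ^ 2)
    (hg : q ∈ SubdiffAt g y₀) (ha : r x₀ = a) (hb : g y₀ = b) (z : X) (y : Y) :
    ((b - a - F x₀ y₀ + (1 / (2 * μx) * ‖z - -(μx • x₀)‖ ^ 2 + μy / 2 * ‖y - y₀‖ ^ 2) : ℝ) : EReal)
      ≤ Pfun μx μy r g Fh z y := by
  have hx₀ : ((⟪x₀, z⟫ : ℝ) : EReal) - r x₀ - (Fh x₀ y : EReal) + g y ≤ conjG r g Fh z y :=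
    le_iSup (fun x => ((⟪x, z⟫ : ℝ) : EReal) - r x - (Fh x y : EReal) + g y) x₀
  calc _ ≤ ((1 / (2 * μx) * ‖z‖ ^ 2 + μy / 2 * ‖y‖ ^ 2 : ℝ) : EReal)
        + ((⟪x₀, z⟫ - a - Fh x₀ y + (b + ⟪q, y - y₀⟫) : ℝ) : EReal) := by
        rw [← EReal.coe_add, EReal.coe_le_coe_iff, hFh, sub_neg_eq_add,
          one_div_two_mul_norm_add_smul_sq hμx]
        linarith [hconc y]
    _ ≤ _ := by
        refine add_le_add_right (le_trans ?_ hx₀) _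
        rw [EReal.coe_add, EReal.coe_sub, EReal.coe_sub, ← ha]
        exact add_le_add_right (coe_add_inner_le_of_mem_subdiffAt hg hb y) _

end SaddleSolution

theorem stmt_3_general {dx dy : ℕ}
    (F : EuclideanSpace ℝ (Fin dx) → EuclideanSpace ℝ (Fin dy) → ℝ)
    (gFx : EuclideanSpace ℝ (Fin dx) → EuclideanSpace ℝ (Fin dy) → EuclideanSpace ℝ (Fin dx))
    (gFy : EuclideanSpace ℝ (Fin dx) → EuclideanSpace ℝ (Fin dy) → EuclideanSpace ℝ (Fin dy))
    (μx μy : ℝ) (hμx : 0 < μx) (hμy : 0 < μy)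
    (hconv : ∀ x1 x2 y, F x2 y ≥ F x1 y + ⟪gFx x1 y, x2 - x1⟫ + μx / 2 * ‖x2 - x1‖ ^ 2)
    (hconc : ∀ x y1 y2, F x y2 ≤ F x y1 + ⟪gFy x y1, y2 - y1⟫ - μy / 2 * ‖y2 - y1‖ ^ 2)
    (r : EuclideanSpace ℝ (Fin dx) → EReal) (g : EuclideanSpace ℝ (Fin dy) → EReal)
    (hrbot : ∀ x, r x ≠ ⊥) (hgbot : ∀ y, g y ≠ ⊥)
    (Fh : EuclideanSpace ℝ (Fin dx) → EuclideanSpace ℝ (Fin dy) → ℝ)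
    (hFh : ∀ x y, Fh x y = F x y - μx / 2 * ‖x‖ ^ 2 + μy / 2 * ‖y‖ ^ 2)
    (xstar : EuclideanSpace ℝ (Fin dx)) (ystar : EuclideanSpace ℝ (Fin dy))
    (hoptx : -(gFx xstar ystar) ∈ SubdiffAt r xstar)
    (hopty : gFy xstar ystar ∈ SubdiffAt g ystar)
    (zstar : EuclideanSpace ℝ (Fin dx)) (hzstar : zstar = -(μx • xstar)) :
    (∀ (z : EuclideanSpace ℝ (Fin dx)) (y : EuclideanSpace ℝ (Fin dy)),
        Pfun μx μy r g Fh zstar ystar ≤ Pfun μx μy r g Fh z y)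
    ∧ ∀ (z : EuclideanSpace ℝ (Fin dx)) (y : EuclideanSpace ℝ (Fin dy)),
        Pfun μx μy r g Fh z y = Pfun μx μy r g Fh zstar ystar → z = zstar ∧ y = ystar := by
  subst hzstar
  obtain ⟨a, ha⟩ := exists_eq_coe_of_mem_subdiffAt hoptx (hrbot xstar)
  obtain ⟨b, hb⟩ := exists_eq_coe_of_mem_subdiffAt hopty (hgbot ystar)
  have hq_eq_zero (p : EuclideanSpace ℝ (Fin dx) × EuclideanSpace ℝ (Fin dy))
      (hp : 1 / (2 * μx) * ‖p.1 - -(μx • xstar)‖ ^ 2 + μy / 2 * ‖p.2 - ystar‖ ^ 2 = 0) :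
      p = (-(μx • xstar), ystar) := by
    obtain ⟨hz, hy⟩ := (add_eq_zero_iff_of_nonneg (by positivity) (by positivity)).1 hp
    exact Prod.ext (by simpa [hμx.ne', eq_neg_iff_add_eq_zero] using hz)
      (by simpa [hμy.ne', sub_eq_zero] using hy)
  obtain ⟨hmin, hunique⟩ := unique_minimizer_of_coe_add_le
    (f := fun p => Pfun μx μy r g Fh p.1 p.2) (a := (-(μx • xstar), ystar))
    (q := fun p => 1 / (2 * μx) * ‖p.1 - -(μx • xstar)‖ ^ 2 + μy / 2 * ‖p.2 - ystar‖ ^ 2)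
    (fun _ => by positivity) hq_eq_zero
    (Pfun_le_of_mem_subdiffAt hμx.ne' hFh (hconv xstar · ystar) hoptx ha hb)
    (fun p => coe_add_le_Pfun_of_mem_subdiffAt hμx.ne' hFh (hconc xstar ystar) hopty ha hb p.1 p.2)
  exact ⟨fun z y => hmin (z, y), fun z y h => Prod.ext_iff.mp (hunique (z, y) h)⟩

/-- Lemma `lem:solution` in the paper. If `(x*, y*)` satisfies the first-order
optimality conditions of the minimax problem, then `(z*, y*)` with `z* = −μₓ x*` is the unique
global minimizer of `P`. -/
theorem stmt_3 {dx dy : ℕ}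
    (F : EuclideanSpace ℝ (Fin dx) → EuclideanSpace ℝ (Fin dy) → ℝ)
    (gFx : EuclideanSpace ℝ (Fin dx) → EuclideanSpace ℝ (Fin dy) → EuclideanSpace ℝ (Fin dx))
    (gFy : EuclideanSpace ℝ (Fin dx) → EuclideanSpace ℝ (Fin dy) → EuclideanSpace ℝ (Fin dy))
    (μx μy : ℝ) (hμx : 0 < μx) (hμy : 0 < μy)
    (hgFx : ∀ x y, HasGradientAt (fun x' => F x' y) (gFx x y) x)
    (hgFy : ∀ x y, HasGradientAt (fun y' => F x y') (gFy x y) y)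
    (hconv : ∀ x1 x2 y, F x2 y ≥ F x1 y + ⟪gFx x1 y, x2 - x1⟫ + μx / 2 * ‖x2 - x1‖ ^ 2)
    (hconc : ∀ x y1 y2, F x y2 ≤ F x y1 + ⟪gFy x y1, y2 - y1⟫ - μy / 2 * ‖y2 - y1‖ ^ 2)
    (r : EuclideanSpace ℝ (Fin dx) → EReal) (g : EuclideanSpace ℝ (Fin dy) → EReal)
    (hrbot : ∀ x, r x ≠ ⊥) (hgbot : ∀ y, g y ≠ ⊥)
    (hrproper : ∃ x, r x ≠ ⊤) (hgproper : ∃ y, g y ≠ ⊤)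
    (hrconv : ERealConvexOn r) (hgconv : ERealConvexOn g)
    (hrlsc : LowerSemicontinuous r) (hglsc : LowerSemicontinuous g)
    (Fh : EuclideanSpace ℝ (Fin dx) → EuclideanSpace ℝ (Fin dy) → ℝ)
    (hFh : ∀ x y, Fh x y = F x y - μx / 2 * ‖x‖ ^ 2 + μy / 2 * ‖y‖ ^ 2)
    (xstar : EuclideanSpace ℝ (Fin dx)) (ystar : EuclideanSpace ℝ (Fin dy))
    (hoptx : -(gFx xstar ystar) ∈ SubdiffAt r xstar)
    (hopty : gFy xstar ystar ∈ SubdiffAt g ystar)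
    (zstar : EuclideanSpace ℝ (Fin dx)) (hzstar : zstar = -(μx • xstar)) :
    (∀ (z : EuclideanSpace ℝ (Fin dx)) (y : EuclideanSpace ℝ (Fin dy)),
        Pfun μx μy r g Fh zstar ystar ≤ Pfun μx μy r g Fh z y)
    ∧ ∀ (z : EuclideanSpace ℝ (Fin dx)) (y : EuclideanSpace ℝ (Fin dy)),
        Pfun μx μy r g Fh z y = Pfun μx μy r g Fh zstar ystar → z = zstar ∧ y = ystar :=
  stmt_3_general F gFx gFy μx μy hμx hμy hconv hconc r g hrbot hgbot Fh hFh xstar ystar hoptx hopty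
    zstar hzstar
end
end

section
/- Let γ_x, γ_y, M > 0, let t be a nonnegative integer, and let x^{−1}, x^t, x* ∈ ℝ^{d_x}, y^{−1}, y^t, y* ∈ ℝ^{d_y}, w_x ∈ ℝ^{d_x}, w_y ∈ ℝ^{d_y}. Assume: (i) the strong monotonicity bound γ_x^{−1}‖x^t − x*‖² + γ_y^{−1}‖y^t − y*‖² ≤ γ_x‖w_x‖² + γ_y‖w_y‖²; (ii) the residual bound γ_x‖w_x‖² + γ_y‖w_y‖² ≤ (288 M²/(t+1)²)·(γ_x^{−1}‖x^{−1} − x*‖² + γ_y^{−1}‖y^{−1} − y*‖²); and (iii) (t+1)² ≥ 1152 M². Then the stopping criterion holds: γ_x‖w_x‖² + γ_y‖w_y‖² ≤ γ_x^{−1}‖x^t − x^{−1}‖² + γ_y^{−1}‖y^t − y^{−1}‖². -/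
open scoped RealInnerProductSpace

lemma key_ineq {E : Type*} [NormedAddCommGroup E] [InnerProductSpace ℝ E]
    (u v : E) : ‖v‖ ^ 2 / 2 - ‖u‖ ^ 2 ≤ ‖u - v‖ ^ 2 := by
  have h := abs_norm_sub_norm_le u v
  have h2 := abs_le.mp h
  nlinarith [sq_nonneg (‖v‖ - 2 * ‖u‖), mul_nonneg (by linarith [h2.2] : (0:ℝ) ≤ ‖u - v‖ - (‖u‖ - ‖v‖)) (by linarith [h2.1] : (0:ℝ) ≤ ‖u - v‖ + (‖u‖ - ‖v‖))]

/-- Core inequality behind the inner-loop iteration bound of FOAM: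
under the strong monotonicity bound (i), the residual bound (ii) and `(t+1)² ≥ 1152 M²` (iii),
the stopping criterion of the inner while-loop holds. -/
theorem stmt_5 {dx dy : ℕ} (γx γy M : ℝ) (hγx : 0 < γx) (hγy : 0 < γy) (hM : 0 < M)
    (t : ℕ)
    (xm1 xt xstar : EuclideanSpace ℝ (Fin dx))
    (ym1 yt ystar : EuclideanSpace ℝ (Fin dy))
    (wx : EuclideanSpace ℝ (Fin dx)) (wy : EuclideanSpace ℝ (Fin dy))
    (h1 : γx⁻¹ * ‖xt - xstar‖ ^ 2 + γy⁻¹ * ‖yt - ystar‖ ^ 2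
        ≤ γx * ‖wx‖ ^ 2 + γy * ‖wy‖ ^ 2)
    (h2 : γx * ‖wx‖ ^ 2 + γy * ‖wy‖ ^ 2
        ≤ 288 * M ^ 2 / ((t : ℝ) + 1) ^ 2 *
            (γx⁻¹ * ‖xm1 - xstar‖ ^ 2 + γy⁻¹ * ‖ym1 - ystar‖ ^ 2))
    (h3 : ((t : ℝ) + 1) ^ 2 ≥ 1152 * M ^ 2) :
    γx * ‖wx‖ ^ 2 + γy * ‖wy‖ ^ 2
      ≤ γx⁻¹ * ‖xt - xm1‖ ^ 2 + γy⁻¹ * ‖yt - ym1‖ ^ 2 := by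
  have hx : ‖xm1 - xstar‖ ^ 2 / 2 - ‖xt - xstar‖ ^ 2 ≤ ‖xt - xm1‖ ^ 2 := by
    have := key_ineq (xt - xstar) (xm1 - xstar)
    simpa [sub_sub_sub_cancel_right] using this
  have hy : ‖ym1 - ystar‖ ^ 2 / 2 - ‖yt - ystar‖ ^ 2 ≤ ‖yt - ym1‖ ^ 2 := by
    have := key_ineq (yt - ystar) (ym1 - ystar)
    simpa [sub_sub_sub_cancel_right] using this
  have ht : (0:ℝ) < ((t : ℝ) + 1) ^ 2 := by positivity
  have hD : 0 ≤ γx⁻¹ * ‖xm1 - xstar‖ ^ 2 + γy⁻¹ * ‖ym1 - ystar‖ ^ 2 := by positivity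
  have hc : 288 * M ^ 2 / ((t : ℝ) + 1) ^ 2 ≤ 1 / 4 := by
    rw [div_le_div_iff₀ ht (by norm_num)]
    nlinarith
  have h2' : γx * ‖wx‖ ^ 2 + γy * ‖wy‖ ^ 2
      ≤ 1 / 4 * (γx⁻¹ * ‖xm1 - xstar‖ ^ 2 + γy⁻¹ * ‖ym1 - ystar‖ ^ 2) :=
    h2.trans (mul_le_mul_of_nonneg_right hc hD)
  have hγxi : (0:ℝ) < γx⁻¹ := by positivity
  have hγyi : (0:ℝ) < γy⁻¹ := by positivity
  nlinarith [mul_le_mul_of_nonneg_left hx hγxi.le, mul_le_mul_of_nonneg_left hy hγyi.le]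
end

section
/- Let μ_x > 0, α ∈ (0, 1], and η_z = μ_x/2. Let z^k, z_f^k, z_g^k, z_f^{k+1}, z^{k+1}, z*, x_f^{k+1} ∈ ℝ^{d_x} satisfy z_g^k = α z^k + (1−α) z_f^k and z^{k+1} = z^k + η_z μ_x^{−1}(z_f^{k+1} − z^k) − η_z(x_f^{k+1} + μ_x^{−1} z_f^{k+1}). Then (1/η_z)‖z^{k+1} − z*‖² ≤ (1/η_z − μ_x^{−1})‖z^k − z*‖² + μ_x^{−1}‖z_f^{k+1} − z*‖² + (2/α)⟨x_f^{k+1} + μ_x^{−1} z_f^{k+1}, (1−α) z_f^k + α z* − z_f^{k+1}⟩ + (1/α)·[(8/μ_x)‖z_f^{k+1} + (μ_x/2)(x_f^{k+1} − μ_x^{−1} z_g^k)‖² − (μ_x/8)‖x_f^{k+1} + μ_x^{−1} z_g^k‖²]. -/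
set_option maxHeartbeats 2000000

open scoped RealInnerProductSpace

/-- Per-iteration algebraic estimate for the `z`-variable update of the
accelerated proximal point algorithm (Lemma `pp:lem:1` in the paper). -/
theorem stmt_6 {dx : ℕ} (μx α ηz : ℝ) (hμx : 0 < μx) (hα0 : 0 < α) (hα1 : α ≤ 1)
    (hηz : ηz = μx / 2)
    (zk zfk zgk zfk1 zk1 zstar xfk1 : EuclideanSpace ℝ (Fin dx))
    (hzg : zgk = α • zk + (1 - α) • zfk)
    (hzstep : zk1 = zk + (ηz * μx⁻¹) • (zfk1 - zk) - ηz • (xfk1 + μx⁻¹ • zfk1)) :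
    (1 / ηz) * ‖zk1 - zstar‖ ^ 2
      ≤ (1 / ηz - μx⁻¹) * ‖zk - zstar‖ ^ 2 + μx⁻¹ * ‖zfk1 - zstar‖ ^ 2
        + (2 / α) * ⟪xfk1 + μx⁻¹ • zfk1, (1 - α) • zfk + α • zstar - zfk1⟫
        + (1 / α) * ((8 / μx) * ‖zfk1 + (μx / 2) • (xfk1 - μx⁻¹ • zgk)‖ ^ 2
            - (μx / 8) * ‖xfk1 + μx⁻¹ • zgk‖ ^ 2) := by
  subst hηz hzg hzstep
  have hμ : (μx : ℝ) ≠ 0 := hμx.ne'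
  have hα : (α : ℝ) ≠ 0 := hα0.ne'
  set w : EuclideanSpace ℝ (Fin dx) := xfk1 + μx⁻¹ • zfk1 with hw
  set u : EuclideanSpace ℝ (Fin dx) := zfk1 - (α • zk + (1 - α) • zfk) with hu
  have key :
      ((1 / (μx/2) - μx⁻¹) * ‖zk - zstar‖ ^ 2 + μx⁻¹ * ‖zfk1 - zstar‖ ^ 2
        + (2 / α) * ⟪w, (1 - α) • zfk + α • zstar - zfk1⟫
        + (1 / α) * ((8 / μx) * ‖zfk1 + (μx / 2) • (xfk1 - μx⁻¹ • (α • zk + (1 - α) • zfk))‖ ^ 2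
            - (μx / 8) * ‖xfk1 + μx⁻¹ • (α • zk + (1 - α) • zfk)‖ ^ 2))
      - (1 / (μx/2)) * ‖zk + ((μx/2) * μx⁻¹) • (zfk1 - zk) - (μx/2) • w - zstar‖ ^ 2
      = (1/(2*μx)) * ‖(zk - zfk1) - μx • w‖^2
        + (1/α) * ((7*μx/8) * ‖w + (9/(7*μx)) • u‖^2
            + (3/(7*μx)) * ‖u‖^2 + μx*(1-α) * ‖w‖^2) := by
    simp only [hw, hu, ← real_inner_self_eq_norm_sq]
    simp only [inner_add_left, inner_add_right, inner_sub_left, inner_sub_right,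
      real_inner_smul_left, real_inner_smul_right, real_inner_comm zfk1 zk,
      real_inner_comm zstar zk, real_inner_comm zstar zfk1, real_inner_comm zfk zk,
      real_inner_comm zfk zfk1, real_inner_comm zfk zstar, real_inner_comm xfk1 zk,
      real_inner_comm xfk1 zfk1, real_inner_comm xfk1 zstar, real_inner_comm xfk1 zfk]
    field_simp
    ring
  have h1 : 0 ≤ (1/(2*μx)) * ‖(zk - zfk1) - μx • w‖^2 :=
    mul_nonneg (by positivity) (by positivity)
  have h2 : 0 ≤ (1/α) * ((7*μx/8) * ‖w + (9/(7*μx)) • u‖^2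
      + (3/(7*μx)) * ‖u‖^2 + μx*(1-α) * ‖w‖^2) := by
    have : (0:ℝ) ≤ 1 - α := by linarith
    positivity
  linarith [key, h1, h2]
end

section
/- Let μ_y, θ_y > 0, α ∈ (0, 1], and η_y = min{1/(2μ_y), θ_y/(2α)}. Let y^k, y_f^k, y_g^k, y_f^{k+1}, y^{k+1}, y*, w_f^{k+1} ∈ ℝ^{d_y} satisfy y_g^k = α y^k + (1−α) y_f^k and y^{k+1} = y^k + η_y μ_y(y_f^{k+1} − y^k) − η_y(w_f^{k+1} + μ_y y_f^{k+1}). Then (1/η_y)‖y^{k+1} − y*‖² ≤ (1/η_y − μ_y)‖y^k − y*‖² + μ_y‖y_f^{k+1} − y*‖² + (2/α)⟨w_f^{k+1} + μ_y y_f^{k+1}, (1−α) y_f^k + α y* − y_f^{k+1}⟩ + (1/α)·[θ_y‖w_f^{k+1} + μ_y y_f^{k+1} + θ_y^{−1}(y_f^{k+1} − y_g^k)‖² − θ_y^{−1}‖y_f^{k+1} − y_g^k‖²]. -/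
open scoped RealInnerProductSpace

/-- Nonnegativity of the residual quadratic form. -/
lemma stmt_7_aux_nonneg {dy : ℕ} (μy θy α ηy : ℝ) (hμy : 0 < μy)
    (hη0 : 0 < ηy) (hημ : ηy * μy ≤ 1/2) (hηθ : ηy ≤ θy / α - ηy)
    (v c : EuclideanSpace ℝ (Fin dy)) :
    0 ≤ μy * (1 - ηy * μy) * ‖c‖ ^ 2 - 2 * (ηy * μy) * ⟪v, c⟫
        + (θy / α - ηy) * ‖v‖ ^ 2 := by
  have h1 : ⟪v, c⟫ ≤ ‖v‖ * ‖c‖ := real_inner_le_norm v c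
  have h4 : 0 ≤ (μy/2) * (‖c‖ - 2 * ηy * ‖v‖)^2 := by positivity
  have h5 : 0 ≤ (ηy * (1 - 2 * (ηy * μy))) * ‖v‖^2 := by
    have : 0 ≤ 1 - 2 * (ηy * μy) := by linarith
    positivity
  have h6 : 0 ≤ (μy * (1/2 - ηy * μy)) * ‖c‖^2 := by
    have : 0 ≤ 1/2 - ηy * μy := by linarith
    positivity
  have h7 : 0 ≤ ((θy / α - ηy) - ηy) * ‖v‖^2 := by
    have : 0 ≤ (θy / α - ηy) - ηy := by linarith
    positivity
  have h8 : 2 * (ηy * μy) * ⟪v, c⟫ ≤ 2 * (ηy * μy) * (‖v‖ * ‖c‖) := by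
    have : 0 ≤ 2 * (ηy * μy) := by positivity
    exact mul_le_mul_of_nonneg_left h1 this
  nlinarith [h4, h5, h6, h7, h8]

set_option maxHeartbeats 1000000 in
lemma stmt_7_aux_id {dy : ℕ} (μy θy α ηy : ℝ) (hθy : θy ≠ 0)
    (hα0 : α ≠ 0) (hη0 : ηy ≠ 0)
    (yk yfk yfk1 ystar wfk1 : EuclideanSpace ℝ (Fin dy)) :
    (1 / ηy - μy) * ‖yk - ystar‖ ^ 2 + μy * ‖yfk1 - ystar‖ ^ 2
        + (2 / α) * ⟪wfk1 + μy • yfk1, (1 - α) • yfk + α • ystar - yfk1⟫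
        + (1 / α) * (θy * ‖wfk1 + μy • yfk1 + θy⁻¹ • (yfk1 - (α • yk + (1 - α) • yfk))‖ ^ 2
            - θy⁻¹ * ‖yfk1 - (α • yk + (1 - α) • yfk)‖ ^ 2)
        - (1 / ηy) * ‖yk + (ηy * μy) • (yfk1 - yk) - ηy • (wfk1 + μy • yfk1) - ystar‖ ^ 2
      = μy * (1 - ηy * μy) * ‖yk - yfk1‖ ^ 2 - 2 * (ηy * μy) * ⟪wfk1 + μy • yfk1, yk - yfk1⟫
        + (θy / α - ηy) * ‖wfk1 + μy • yfk1‖ ^ 2 := by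
  simp only [← @real_inner_self_eq_norm_sq]
  simp only [inner_add_left, inner_add_right, inner_sub_left, inner_sub_right,
    real_inner_smul_left, real_inner_smul_right, real_inner_comm]
  field_simp
  ring

/-- Per-iteration algebraic estimate for the `y`-variable update of the
accelerated proximal point algorithm (Lemma `pp:lem:2` in the paper). -/
theorem stmt_7 {dy : ℕ} (μy θy α ηy : ℝ) (hμy : 0 < μy) (hθy : 0 < θy)
    (hα0 : 0 < α) (hα1 : α ≤ 1)
    (hηy : ηy = min (1 / (2 * μy)) (θy / (2 * α)))
    (yk yfk ygk yfk1 yk1 ystar wfk1 : EuclideanSpace ℝ (Fin dy))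
    (hyg : ygk = α • yk + (1 - α) • yfk)
    (hystep : yk1 = yk + (ηy * μy) • (yfk1 - yk) - ηy • (wfk1 + μy • yfk1)) :
    (1 / ηy) * ‖yk1 - ystar‖ ^ 2
      ≤ (1 / ηy - μy) * ‖yk - ystar‖ ^ 2 + μy * ‖yfk1 - ystar‖ ^ 2
        + (2 / α) * ⟪wfk1 + μy • yfk1, (1 - α) • yfk + α • ystar - yfk1⟫
        + (1 / α) * (θy * ‖wfk1 + μy • yfk1 + θy⁻¹ • (yfk1 - ygk)‖ ^ 2
            - θy⁻¹ * ‖yfk1 - ygk‖ ^ 2) := by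
  have hη0 : 0 < ηy := by
    rw [hηy]
    exact lt_min (by positivity) (by positivity)
  have hη1 : ηy ≤ 1 / (2 * μy) := hηy ▸ min_le_left _ _
  have hη2 : ηy ≤ θy / (2 * α) := hηy ▸ min_le_right _ _
  have hημ : ηy * μy ≤ 1 / 2 := by
    rw [le_div_iff₀ (by positivity)] at hη1
    linarith
  have hηθ : ηy ≤ θy / α - ηy := by
    have h2α : θy / α = 2 * (θy / (2 * α)) := by
      field_simp
    rw [h2α]
    linarith
  subst hyg hystep
  have hid := stmt_7_aux_id μy θy α ηy hθy.ne' hα0.ne' hη0.ne' yk yfk yfk1 ystar wfk1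
  have hnn := stmt_7_aux_nonneg μy θy α ηy hμy hη0 hημ hηθ
    (wfk1 + μy • yfk1) (yk - yfk1)
  linarith [hid, hnn]
end

section
/- Let A : ℝ^d → ℝ^d be monotone and M-Lipschitz (M > 0), and set λ = 1/(√5·M). Let u^{−1}, u^0, u*, b^0, b* ∈ ℝ^d satisfy u^0 = u^{−1} − λ A(u^{−1}) − λ b^0, A(u*) + b* = 0, and the monotonicity inequality ⟨u^0 − u*, b^0 − b*⟩ ≥ 0 (which holds when b^0 ∈ B(u^0) and b* ∈ B(u*) for a monotone operator B). Then, with a^0 = A(u^0): 96 M²‖u^0 − u*‖² + 12‖a^0 + b^0‖² ≤ 288 M²‖u^{−1} − u*‖². -/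
open scoped RealInnerProductSpace

/-- Initialization bound for the Extra Anchored Gradient algorithm for
monotone inclusions (Lemma `eag:lem:1` in the paper). -/
theorem stmt_9 {d : ℕ} (M : ℝ) (hM : 0 < M)
    (A : EuclideanSpace ℝ (Fin d) → EuclideanSpace ℝ (Fin d))
    (hAmono : ∀ u1 u2, 0 ≤ ⟪A u1 - A u2, u1 - u2⟫)
    (hAlip : ∀ u1 u2, ‖A u1 - A u2‖ ≤ M * ‖u1 - u2‖)
    (lam : ℝ) (hlam : lam = 1 / (Real.sqrt 5 * M))
    (um1 u0 ustar b0 bstar : EuclideanSpace ℝ (Fin d))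
    (hu0 : u0 = um1 - lam • A um1 - lam • b0)
    (hsol : A ustar + bstar = 0)
    (hbmono : 0 ≤ ⟪u0 - ustar, b0 - bstar⟫) :
    96 * M ^ 2 * ‖u0 - ustar‖ ^ 2 + 12 * ‖A u0 + b0‖ ^ 2
      ≤ 288 * M ^ 2 * ‖um1 - ustar‖ ^ 2 := by
  set c : ℝ := Real.sqrt 5 with hc_def
  have hc0 : (0:ℝ) < c := Real.sqrt_pos.mpr (by norm_num)
  have hc2 : c ^ 2 = 5 := Real.sq_sqrt (by norm_num)
  have hcle : c ≤ 7/3 := by nlinarith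
  have hlam_pos : 0 < lam := by rw [hlam]; positivity
  have hlamc : lam * (c * M) = 1 := by
    rw [hlam]; field_simp
  have hbstar : bstar = -A ustar := eq_neg_of_add_eq_zero_right hsol
  set x := um1 - ustar with hx_def
  set v := A um1 + b0 with hv_def
  set w := A u0 + b0 with hw_def
  have hu0x : u0 - ustar = x - lam • v := by
    rw [hu0, hx_def, hv_def, smul_add]; abel
  have hxdecomp : x = (u0 - ustar) + lam • v := by
    rw [hu0x]; abel
  have hvdecomp : v = (A um1 - A ustar) + (b0 - bstar) := by
    rw [hbstar, hv_def]; abel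
  have hb0bs : b0 - bstar = v - (A um1 - A ustar) := by
    rw [hbstar, hv_def]; abel
  -- inner product facts
  have h1 : 0 ≤ ⟪x, A um1 - A ustar⟫ := by
    rw [real_inner_comm]; exact hAmono um1 ustar
  have h3 : ⟪v, b0 - bstar⟫ = ‖v‖ ^ 2 - ⟪v, A um1 - A ustar⟫ := by
    rw [hb0bs, inner_sub_right, real_inner_self_eq_norm_sq]
  have h4 : ⟪v, A um1 - A ustar⟫ ≤ ‖v‖ * (M * ‖x‖) := by
    calc ⟪v, A um1 - A ustar⟫ ≤ ‖v‖ * ‖A um1 - A ustar‖ := real_inner_le_norm _ _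
      _ ≤ ‖v‖ * (M * ‖x‖) :=
        mul_le_mul_of_nonneg_left (hAlip um1 ustar) (norm_nonneg v)
  have hxb : ⟪x, b0 - bstar⟫ = ⟪u0 - ustar, b0 - bstar⟫ + lam * ⟪v, b0 - bstar⟫ := by
    conv_lhs => rw [hxdecomp]
    rw [inner_add_left, real_inner_smul_left]
  have hxv : ⟪x, v⟫ = ⟪x, A um1 - A ustar⟫ + ⟪u0 - ustar, b0 - bstar⟫
      + lam * ⟪v, b0 - bstar⟫ := by
    conv_lhs => rw [hvdecomp]
    rw [inner_add_right, hxb]; ring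
  have hkey : lam * (‖v‖ ^ 2 - ‖v‖ * (M * ‖x‖)) ≤ ⟪x, v⟫ := by
    rw [hxv, h3]
    nlinarith [mul_le_mul_of_nonneg_left h4 hlam_pos.le]
  have hcs : ⟪x, v⟫ ≤ ‖x‖ * ‖v‖ := real_inner_le_norm x v
  -- norm expansion
  have hU : ‖u0 - ustar‖ ^ 2 = ‖x‖ ^ 2 - 2 * (lam * ⟪x, v⟫) + lam ^ 2 * ‖v‖ ^ 2 := by
    rw [hu0x, @norm_sub_sq_real, real_inner_smul_right, norm_smul, Real.norm_eq_abs,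
      abs_of_pos hlam_pos, mul_pow]
  -- Lipschitz step
  have hum : u0 - um1 = -(lam • v) := by
    rw [hu0, hv_def, smul_add]; abel
  have hwv : ‖w - v‖ ≤ M * (lam * ‖v‖) := by
    have hwveq : w - v = A u0 - A um1 := by rw [hw_def, hv_def]; abel
    rw [hwveq]
    calc ‖A u0 - A um1‖ ≤ M * ‖u0 - um1‖ := hAlip u0 um1
      _ = M * (lam * ‖v‖) := by
        rw [hum, norm_neg, norm_smul, Real.norm_eq_abs, abs_of_pos hlam_pos]
  have hW : ‖w‖ ≤ ‖v‖ + M * (lam * ‖v‖) := by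
    calc ‖w‖ = ‖v + (w - v)‖ := by congr 1; abel
      _ ≤ ‖v‖ + ‖w - v‖ := norm_add_le _ _
      _ ≤ ‖v‖ + M * (lam * ‖v‖) := by linarith
  -- pass to scalar inequalities
  set X := ‖x‖ with hX_def
  set V := ‖v‖ with hV_def
  set W := ‖w‖ with hW_def2
  set U := ‖u0 - ustar‖ with hU_def
  have hX0 : 0 ≤ X := norm_nonneg _
  have hV0 : 0 ≤ V := norm_nonneg _
  have hW0 : 0 ≤ W := norm_nonneg _
  have hU0 : 0 ≤ U := norm_nonneg _
  have hlamM : lam * M * c = 1 := by rw [mul_assoc, mul_comm M c]; exact hlamc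
  have hlam2 : lam ^ 2 * (5 * M ^ 2) = 1 := by
    linear_combination (lam * M * c + 1) * hlamM - lam ^ 2 * M ^ 2 * hc2
  -- (a) V^2 ≤ (c+1) M X V
  have ha : V ^ 2 ≤ (c + 1) * (M * X) * V := by
    have h := hkey.trans hcs
    -- lam * V^2 ≤ X*V + lam*M*V*X ; multiply by c*M
    have h2 : c * M * (lam * (V ^ 2 - V * (M * X))) ≤ c * M * (X * V) := by
      apply mul_le_mul_of_nonneg_left h (by positivity)
    have h3 : c * M * lam = 1 := by rw [← hlamc]; ring
    have h4' : V ^ 2 - V * (M * X) ≤ c * M * (X * V) := by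
      calc V ^ 2 - V * (M * X) = c * M * (lam * (V ^ 2 - V * (M * X))) := by
            rw [show c * M * (lam * (V ^ 2 - V * (M * X))) = (c * M * lam) * (V ^ 2 - V * (M * X)) by ring, h3]; ring
        _ ≤ c * M * (X * V) := h2
    linarith
  -- (b) 5 M^2 U^2 ≤ 5 M^2 X^2 - V^2 + 2 M V X
  have hb : 5 * M ^ 2 * U ^ 2 ≤ 5 * M ^ 2 * X ^ 2 - V ^ 2 + 2 * M * V * X := by
    have h5 : lam * (V ^ 2 - V * (M * X)) ≤ ⟪x, v⟫ := hkey
    have h6 : U ^ 2 ≤ X ^ 2 - 2 * (lam * (lam * (V ^ 2 - V * (M * X)))) + lam ^ 2 * V ^ 2 := by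
      rw [hU]
      have := mul_le_mul_of_nonneg_left h5 hlam_pos.le
      linarith
    have h6' : 5 * M ^ 2 * U ^ 2
        ≤ 5 * M ^ 2 * (X ^ 2 - 2 * (lam * (lam * (V ^ 2 - V * (M * X)))) + lam ^ 2 * V ^ 2) :=
      mul_le_mul_of_nonneg_left h6 (by positivity)
    have h7 : 5 * M ^ 2 * U ^ 2 ≤ 5 * M ^ 2 * X ^ 2
        - 2 * (lam ^ 2 * (5 * M ^ 2)) * (V ^ 2 - V * (M * X))
        + (lam ^ 2 * (5 * M ^ 2)) * V ^ 2 := by linarith [h6']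
    rw [hlam2] at h7
    linarith [h7]
  -- (c) 5 W^2 ≤ (c+1)^2 V^2
  have hcW : c * W ≤ (c + 1) * V := by
    have h8 : M * lam * c = 1 := by rw [← hlamM]; ring
    have h9 : c * W ≤ c * (V + M * (lam * V)) :=
      mul_le_mul_of_nonneg_left hW hc0.le
    calc c * W ≤ c * (V + M * (lam * V)) := h9
      _ = (c + 1) * V := by linear_combination V * h8
  have hW2 : 5 * W ^ 2 ≤ (c + 1) ^ 2 * V ^ 2 := by
    have h10 := mul_self_le_mul_self (by positivity : (0:ℝ) ≤ c * W) hcW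
    calc 5 * W ^ 2 = (c * W) * (c * W) := by rw [← hc2]; ring
      _ ≤ ((c + 1) * V) * ((c + 1) * V) := h10
      _ = (c + 1) ^ 2 * V ^ 2 := by ring
  -- finish
  rcases eq_or_lt_of_le hV0 with hVzero | hVpos
  · -- V = 0
    have hV00 : V = 0 := hVzero.symm
    rw [hV00] at hW2 hb
    have hWsq : W ^ 2 = 0 := by
      have h11 : (c + 1) ^ 2 * (0:ℝ) ^ 2 = 0 := by ring
      have h12 : W ^ 2 ≤ 0 := by linarith [hW2]
      exact le_antisymm h12 (sq_nonneg W)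
    linarith [hb, hWsq, sq_nonneg (M * X)]
  · have ha' : V * V ≤ ((c + 1) * (M * X)) * V := by linarith [ha]
    have hVle : V ≤ (c + 1) * (M * X) := le_of_mul_le_mul_right ha' hVpos
    have hMXV : M * X * V ≤ (c + 1) * (M * X) ^ 2 := by
      have := mul_le_mul_of_nonneg_left hVle (show (0:ℝ) ≤ M * X by positivity)
      linarith [this]
    have hW2' : 5 * W ^ 2 ≤ (6 + 2 * c) * V ^ 2 := by
      have he : (c + 1) ^ 2 * V ^ 2 = (6 + 2 * c) * V ^ 2 := by
        linear_combination V ^ 2 * hc2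
      linarith [hW2, he]
    have hc1 : (1:ℝ) ≤ c := by
      rw [hc_def, show (1:ℝ) = Real.sqrt 1 from Real.sqrt_one.symm]
      exact Real.sqrt_le_sqrt (by norm_num)
    have haC : (c - 1) * V ^ 2 ≤ (c - 1) * ((c + 1) * (M * X) * V) :=
      mul_le_mul_of_nonneg_left ha (by linarith)
    have he2 : (c - 1) * ((c + 1) * (M * X) * V) = 4 * (M * X * V) := by
      linear_combination (M * X * V) * hc2
    have hd : c * V ^ 2 - V ^ 2 ≤ 4 * (M * X * V) := by linarith [haC, he2]
    have hc3 : c * (M * X) ^ 2 ≤ (7/3) * (M * X) ^ 2 :=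
      mul_le_mul_of_nonneg_right hcle (sq_nonneg _)
    linarith [hb, hW2', hd, hMXV, hc3]
end

section
/- Let A : ℝ^d → ℝ^d be monotone and M-Lipschitz (M > 0), set λ = 1/(√5·M) and β_t = 2/(t+3). Fix t ≥ 0 and let u^0, u^t, u^{t+1/2}, u^{t+1}, b^t, b^{t+1} ∈ ℝ^d satisfy: u^{t+1/2} = u^t + β_t(u^0 − u^t) − λ(A(u^t) + b^t); u^{t+1} = u^t + β_t(u^0 − u^t) − λ A(u^{t+1/2}) − λ b^{t+1}; and the monotonicity inequality ⟨u^{t+1} − u^t, (A(u^{t+1}) + b^{t+1}) − (A(u^t) + b^t)⟩ ≥ 0 (which holds when b^t ∈ B(u^t), b^{t+1} ∈ B(u^{t+1}) for a monotone operator B). Define U^s = ⟨A(u^s) + b^s, u^s − u^0⟩ + (λ/(2β_s))‖A(u^s) + b^s‖² for s ∈ {t, t+1}. Then U^{t+1} ≤ (1 − β_t) U^t. -/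
open scoped RealInnerProductSpace

set_option maxHeartbeats 1000000 in
/-- Per-iteration Lyapunov decrease of the Extra Anchored Gradient
algorithm for monotone inclusions (Lemma `eag:lem:3` in the paper). -/
theorem stmt_11 {d : ℕ} (M : ℝ) (hM : 0 < M)
    (A : EuclideanSpace ℝ (Fin d) → EuclideanSpace ℝ (Fin d))
    (hAmono : ∀ u1 u2, 0 ≤ ⟪A u1 - A u2, u1 - u2⟫)
    (hAlip : ∀ u1 u2, ‖A u1 - A u2‖ ≤ M * ‖u1 - u2‖)
    (lam : ℝ) (hlam : lam = 1 / (Real.sqrt 5 * M))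
    (t : ℕ) (βt βt1 : ℝ)
    (hβt : βt = 2 / ((t : ℝ) + 3)) (hβt1 : βt1 = 2 / (((t : ℝ) + 1) + 3))
    (u0 ut uth ut1 bt bt1 : EuclideanSpace ℝ (Fin d))
    (hhalf : uth = ut + βt • (u0 - ut) - lam • (A ut + bt))
    (hnext : ut1 = ut + βt • (u0 - ut) - lam • A uth - lam • bt1)
    (hbmono : 0 ≤ ⟪ut1 - ut, (A ut1 + bt1) - (A ut + bt)⟫) :
    ⟪A ut1 + bt1, ut1 - u0⟫ + lam / (2 * βt1) * ‖A ut1 + bt1‖ ^ 2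
      ≤ (1 - βt) * (⟪A ut + bt, ut - u0⟫ + lam / (2 * βt) * ‖A ut + bt‖ ^ 2) := by
  have hs5 : (0:ℝ) < Real.sqrt 5 := by positivity
  have hs5sq : (Real.sqrt 5)^2 = 5 := Real.sq_sqrt (by norm_num)
  have hlampos : 0 < lam := by rw [hlam]; positivity
  have hlam2 : lam^2 * M^2 = 1/5 := by
    rw [hlam]; field_simp; nlinarith [hs5sq]
  have ht0 : (0:ℝ) ≤ (t:ℝ) := Nat.cast_nonneg t
  subst hβt hβt1
  have ht3 : ((t:ℝ) + 3) ≠ 0 := by positivity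
  have ht4 : ((t:ℝ) + 1 + 3) ≠ 0 := by positivity
  -- vector identities
  have hv1 : ut1 - u0 = (1 - 2/((t:ℝ)+3)) • (ut - u0) - lam • (A uth + bt1) := by
    rw [hnext]; module
  have hv2 : ut1 - ut = (2/((t:ℝ)+3)) • (u0 - ut) - lam • (A uth + bt1) := by
    rw [hnext]; module
  have hv3 : ut1 - uth = lam • ((A ut + bt) - (A uth + bt1)) := by
    rw [hnext, hhalf]; module
  -- scalar atoms
  set x := A ut + bt with hxd
  set y := A uth + bt1 with hyd
  set z := A ut1 + bt1 with hzd
  -- F1 : expand the goal's first inner product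
  have F1 : ⟪z, ut1 - u0⟫ = (1 - 2/((t:ℝ)+3)) * ⟪z, ut - u0⟫ - lam * ⟪y, z⟫ := by
    rw [hv1, inner_sub_right, real_inner_smul_right, real_inner_smul_right,
      real_inner_comm z y]
  -- F2 : monotonicity of A + B between ut1 and ut
  have F2 : 0 ≤ (2/((t:ℝ)+3)) * (⟪x, ut - u0⟫ - ⟪z, ut - u0⟫)
      - lam * (⟪y, z⟫ - ⟪x, y⟫) := by
    have h := hbmono
    rw [hv2] at h
    rw [inner_sub_left, real_inner_smul_left, real_inner_smul_left,
      inner_sub_right, inner_sub_right] at h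
    have e1 : ⟪u0 - ut, z⟫ = -⟪z, ut - u0⟫ := by
      rw [real_inner_comm, show u0 - ut = -(ut - u0) by abel, inner_neg_right]
    have e2 : ⟪u0 - ut, x⟫ = -⟪x, ut - u0⟫ := by
      rw [real_inner_comm, show u0 - ut = -(ut - u0) by abel, inner_neg_right]
    have e3 : ⟪y, x⟫ = ⟪x, y⟫ := real_inner_comm x y
    rw [e1, e2, e3] at h
    linarith
  -- F3 : Lipschitz bound between ut1 and uth
  have F3 : ‖z‖^2 - 2*⟪y, z⟫ + ‖y‖^2 ≤ (1/5) * (‖x‖^2 - 2*⟪x, y⟫ + ‖y‖^2) := by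
    have hl := hAlip ut1 uth
    have hzy : z - y = A ut1 - A uth := by rw [hzd, hyd]; abel
    have hnn : ‖z - y‖ ≤ M * (lam * ‖x - y‖) := by
      rw [hzy]
      calc ‖A ut1 - A uth‖ ≤ M * ‖ut1 - uth‖ := hl
        _ = M * (lam * ‖x - y‖) := by
            rw [hv3, norm_smul, Real.norm_eq_abs, abs_of_pos hlampos]
    have hsq : ‖z - y‖^2 ≤ (M * (lam * ‖x - y‖))^2 := by
      apply sq_le_sq' _ hnn
      have : 0 ≤ M * (lam * ‖x - y‖) := by positivity
      linarith [norm_nonneg (z - y)]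
    have e1 : ‖z - y‖^2 = ‖z‖^2 - 2*⟪z, y⟫ + ‖y‖^2 := norm_sub_sq_real z y
    have e2 : ‖x - y‖^2 = ‖x‖^2 - 2*⟪x, y⟫ + ‖y‖^2 := norm_sub_sq_real x y
    have e3 : ⟪z, y⟫ = ⟪y, z⟫ := real_inner_comm y z
    have e4 : (M * (lam * ‖x - y‖))^2 = (1/5) * ‖x - y‖^2 := by
      have : (M * (lam * ‖x - y‖))^2 = (lam^2 * M^2) * ‖x - y‖^2 := by ring
      rw [this, hlam2]
    rw [e4, e2] at hsq
    rw [e1, e3] at hsq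
    linarith
  -- F4 : monotonicity of A between ut1 and uth
  have F4 : 0 ≤ ⟪x, z⟫ - ⟪y, z⟫ - ⟪x, y⟫ + ‖y‖^2 := by
    have h := hAmono ut1 uth
    have hzy : A ut1 - A uth = z - y := by rw [hzd, hyd]; abel
    rw [hzy, hv3] at h
    rw [real_inner_smul_right, inner_sub_left, inner_sub_right, inner_sub_right,
      real_inner_self_eq_norm_sq] at h
    have e1 : ⟪z, x⟫ = ⟪x, z⟫ := real_inner_comm x z
    have e2 : ⟪z, y⟫ = ⟪y, z⟫ := real_inner_comm y z
    have e3 : ⟪y, x⟫ = ⟪x, y⟫ := real_inner_comm x y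
    rw [e1, e2, e3] at h
    have := (mul_nonneg_iff_of_pos_left hlampos).mp h
    linarith
  -- F5, F6 : SOS terms
  have F5 : 0 ≤ ‖x‖^2 - 2*⟪x, z⟫ + ‖z‖^2 := by
    have := norm_sub_sq_real x z
    nlinarith [sq_nonneg ‖x - z‖]
  have F6 : 0 ≤ ‖y‖^2 - ⟪y, z⟫ + ‖z‖^2/4 := by
    have e : ‖y - (1/2 : ℝ) • z‖^2 = ‖y‖^2 - ⟪y, z⟫ + ‖z‖^2/4 := by
      rw [norm_sub_sq_real, real_inner_smul_right, norm_smul, Real.norm_eq_abs]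
      rw [mul_pow, sq_abs]
      ring
    nlinarith [sq_nonneg ‖y - (1/2 : ℝ) • z‖]
  -- nonnegative combinations
  have P1 : 0 ≤ (((t:ℝ)+1)/2) * ((2/((t:ℝ)+3)) * (⟪x, ut - u0⟫ - ⟪z, ut - u0⟫)
      - lam * (⟪y, z⟫ - ⟪x, y⟫)) :=
    mul_nonneg (by positivity) F2
  have P2 : 0 ≤ (lam * (5*((t:ℝ)+3)/12)) *
      ((1/5) * (‖x‖^2 - 2*⟪x, y⟫ + ‖y‖^2) - (‖z‖^2 - 2*⟪y, z⟫ + ‖y‖^2)) :=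
    mul_nonneg (by positivity) (by linarith)
  have P3 : 0 ≤ (lam * ((t:ℝ)/3)) * (⟪x, z⟫ - ⟪y, z⟫ - ⟪x, y⟫ + ‖y‖^2) :=
    mul_nonneg (by positivity) F4
  have P4 : 0 ≤ lam * (((t:ℝ)/6) * (‖x‖^2 - 2*⟪x, z⟫ + ‖z‖^2)
      + (‖y‖^2 - ⟪y, z⟫ + ‖z‖^2/4)) :=
    mul_nonneg hlampos.le (add_nonneg (mul_nonneg (by positivity) F5) F6)
  -- the key algebraic identity
  have key : (1 - 2/((t:ℝ)+3)) * (⟪x, ut - u0⟫ + lam / (2 * (2/((t:ℝ)+3))) * ‖x‖^2)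
      - ((1 - 2/((t:ℝ)+3)) * ⟪z, ut - u0⟫ - lam * ⟪y, z⟫
          + lam / (2 * (2/((t:ℝ)+1+3))) * ‖z‖^2)
      = (((t:ℝ)+1)/2) * ((2/((t:ℝ)+3)) * (⟪x, ut - u0⟫ - ⟪z, ut - u0⟫)
          - lam * (⟪y, z⟫ - ⟪x, y⟫))
      + (lam * (5*((t:ℝ)+3)/12)) *
          ((1/5) * (‖x‖^2 - 2*⟪x, y⟫ + ‖y‖^2) - (‖z‖^2 - 2*⟪y, z⟫ + ‖y‖^2))
      + (lam * ((t:ℝ)/3)) * (⟪x, z⟫ - ⟪y, z⟫ - ⟪x, y⟫ + ‖y‖^2)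
      + lam * (((t:ℝ)/6) * (‖x‖^2 - 2*⟪x, z⟫ + ‖z‖^2)
          + (‖y‖^2 - ⟪y, z⟫ + ‖z‖^2/4)) := by
    field_simp
    ring
  rw [F1]
  linarith [P1, P2, P3, P4, key]
end

section
/- Let M > 0, λ = 1/(√5·M), and let T ≥ 1 be an integer. Let u^0, u^T, u* ∈ ℝ^d and r^0, r^T ∈ ℝ^d (representing the residuals a^0 + b^0 and a^T + b^T). Assume: (i) ⟨r^T, u^T − u^0⟩ + (λ(T+3)/4)‖r^T‖² ≤ (3λ/(2(T+1)(T+2)))‖r^0‖²; and (ii) ⟨r^T, u^T − u*⟩ ≥ 0. Then ‖r^T‖² ≤ (1/(T+1)²)·(96 M²‖u^0 − u*‖² + 12‖r^0‖²). -/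
/-!
Monotonicity at the solution gives `⟪rT, uT - u0⟫ ≥ -‖rT‖ ‖u0 - u*‖` by Cauchy–Schwarz, so the
Lyapunov inequality becomes a quadratic inequality `k s² ≤ s b + C` in `s = ‖rT‖`, with
`k = λ(T+3)/4`. Absorbing the cross term by AM–GM gives `s² ≤ b²/k² + 2C/k`, and `1/λ² = 5M²`
turns this into `80 M² b²/(T+3)² + 12 ‖r0‖²/((T+1)(T+2)(T+3))`, which is at most the claimed bound.
-/

open scoped RealInnerProductSpace

theorem neg_norm_mul_norm_le_inner_sub_of_inner_nonneg {E : Type*}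
    [NormedAddCommGroup E] [InnerProductSpace ℝ E] {r u u₀ u' : E}
    (h : 0 ≤ ⟪r, u - u'⟫) : -(‖r‖ * ‖u₀ - u'‖) ≤ ⟪r, u - u₀⟫ := by
  have hsplit : u - u₀ = (u - u') + (u' - u₀) := by abel
  have hcs : -(‖r‖ * ‖u₀ - u'‖) ≤ ⟪r, u' - u₀⟫ := by
    rw [norm_sub_rev]
    exact (abs_le.mp (abs_real_inner_le_norm r (u' - u₀))).1
  rw [hsplit, inner_add_right]
  linarith

theorem sq_le_of_mul_sq_le_mul_add {k s b C : ℝ} (hk : 0 < k)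
    (h : k * s ^ 2 ≤ s * b + C) : s ^ 2 ≤ b ^ 2 / k ^ 2 + 2 * C / k := by
  have hamgm : 2 * (s * b) ≤ k * s ^ 2 + b ^ 2 / k := by
    have : 0 ≤ (k * s - b) ^ 2 / k := by positivity
    have hexp : (k * s - b) ^ 2 / k = k * s ^ 2 - 2 * (s * b) + b ^ 2 / k := by
      field_simp
      ring
    linarith
  have hks : k * s ^ 2 ≤ b ^ 2 / k + 2 * C := by linarith
  calc s ^ 2 = k * s ^ 2 / k := by field_simp
    _ ≤ (b ^ 2 / k + 2 * C) / k := by gcongr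
    _ = b ^ 2 / k ^ 2 + 2 * C / k := by ring

theorem stmt_12_general {d : ℕ} (M : ℝ) (hM : 0 < M)
    (lam : ℝ) (hlam : lam = 1 / (Real.sqrt 5 * M))
    (T : ℕ)
    (u0 uT ustar r0 rT : EuclideanSpace ℝ (Fin d))
    (h1 : ⟪rT, uT - u0⟫ + lam * ((T : ℝ) + 3) / 4 * ‖rT‖ ^ 2
        ≤ 3 * lam / (2 * ((T : ℝ) + 1) * ((T : ℝ) + 2)) * ‖r0‖ ^ 2)
    (h2 : 0 ≤ ⟪rT, uT - ustar⟫) :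
    ‖rT‖ ^ 2 ≤ 1 / ((T : ℝ) + 1) ^ 2 *
      (96 * M ^ 2 * ‖u0 - ustar‖ ^ 2 + 12 * ‖r0‖ ^ 2) := by
  set t : ℝ := (T : ℝ)
  set b := ‖u0 - ustar‖
  set c := ‖r0‖
  have ht : 0 ≤ t := Nat.cast_nonneg T
  have hlam_pos : 0 < lam := by rw [hlam]; positivity
  have hquad := sq_le_of_mul_sq_le_mul_add (s := ‖rT‖) (b := b)
    (C := 3 * lam / (2 * (t + 1) * (t + 2)) * c ^ 2) (by positivity : 0 < lam * (t + 3) / 4)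
    (by linarith [neg_norm_mul_norm_le_inner_sub_of_inner_nonneg (u₀ := u0) h2])
  have hsqrt5 : Real.sqrt 5 ^ 2 = 5 := Real.sq_sqrt (by norm_num)
  calc ‖rT‖ ^ 2
      ≤ b ^ 2 / (lam * (t + 3) / 4) ^ 2
        + 2 * (3 * lam / (2 * (t + 1) * (t + 2)) * c ^ 2) / (lam * (t + 3) / 4) := hquad
    _ = 80 * M ^ 2 * b ^ 2 / (t + 3) ^ 2 + 12 * c ^ 2 / ((t + 1) * (t + 2) * (t + 3)) := by
        rw [hlam]
        field_simp
        rw [hsqrt5]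
        ring
    _ ≤ 96 * M ^ 2 * b ^ 2 / (t + 1) ^ 2 + 12 * c ^ 2 / ((t + 1) * (t + 1) * 1) := by
        gcongr <;> linarith
    _ = 1 / (t + 1) ^ 2 * (96 * M ^ 2 * b ^ 2 + 12 * c ^ 2) := by ring

/-- From the unrolled Lyapunov inequality of the Extra Anchored Gradient
algorithm and monotonicity at the solution, the final residual bound follows. -/
theorem stmt_12 {d : ℕ} (M : ℝ) (hM : 0 < M)
    (lam : ℝ) (hlam : lam = 1 / (Real.sqrt 5 * M))
    (T : ℕ) (hT : 1 ≤ T)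
    (u0 uT ustar r0 rT : EuclideanSpace ℝ (Fin d))
    (h1 : ⟪rT, uT - u0⟫ + lam * ((T : ℝ) + 3) / 4 * ‖rT‖ ^ 2
        ≤ 3 * lam / (2 * ((T : ℝ) + 1) * ((T : ℝ) + 2)) * ‖r0‖ ^ 2)
    (h2 : 0 ≤ ⟪rT, uT - ustar⟫) :
    ‖rT‖ ^ 2 ≤ 1 / ((T : ℝ) + 1) ^ 2 *
      (96 * M ^ 2 * ‖u0 - ustar‖ ^ 2 + 12 * ‖r0‖ ^ 2) :=
  stmt_12_general M hM lam hlam T u0 uT ustar r0 rT h1 h2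
end
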